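/- arXiv:2302.09972 — 13 statements merged into one kernel-verified Lean document; each statement's English description precedes it below -/
import Mathlib

section
/- Let a ≤ b ≤ c be positive reals with c < a + b, and let z₁, z₂, z₃ ∈ ℝ² be three points whose pairwise ℓ∞-distances are exactly a, b, c (in some order). Then at least one of the absolute differences of y-coordinates |y₁−y₂|, |y₂−y₃|, |y₃−y₁| equals a, b, or c. -/
noncomputable def distInf (p q : ℝ × ℝ) : ℝ := max |p.1 - q.1| |p.2 - q.2|

def IsCopy (a b c : ℝ) (z₁ z₂ z₃ : ℝ × ℝ) : Prop :=
  ({distInf z₁ z₂, distInf z₂ z₃, distInf z₃ z₁} : Multiset ℝ) = {a, b, c}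

def NoMonoCopy (a b c : ℝ) (C : ℝ × ℝ → Bool) : Prop :=
  ∀ z₁ z₂ z₃ : ℝ × ℝ, IsCopy a b c z₁ z₂ z₃ → ¬(C z₁ = C z₂ ∧ C z₂ = C z₃)

def IsPeriod (C : ℝ × ℝ → Bool) (v : ℝ × ℝ) : Prop := ∀ z : ℝ × ℝ, C (z + v) = C z

def IsAntiPeriod (C : ℝ × ℝ → Bool) (v : ℝ × ℝ) : Prop := ∀ z : ℝ × ℝ, C (z + v) ≠ C z

def MonoSeg (C : ℝ × ℝ → Bool) (L : ℝ) : Prop :=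
  ∃ x₀ y₀ : ℝ, (∀ t ∈ Set.Icc (0:ℝ) L, C (x₀ + t, y₀) = C (x₀, y₀)) ∨
               (∀ t ∈ Set.Icc (0:ℝ) L, C (x₀, y₀ + t) = C (x₀, y₀))

lemma pair2 {u v b c : ℝ} (h : (u ::ₘ {v} : Multiset ℝ) = b ::ₘ {c}) :
    (u = b ∧ v = c) ∨ (u = c ∧ v = b) := by
  rcases Multiset.cons_eq_cons.mp h with ⟨h1, h2⟩ | ⟨_, cs, h1, h2⟩
  · exact Or.inl ⟨h1, Multiset.singleton_inj.mp h2⟩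
  · obtain ⟨hv, hcs⟩ := (Multiset.singleton_eq_cons_iff _).mp h1
    subst hcs
    obtain ⟨hc, -⟩ := (Multiset.singleton_eq_cons_iff _).mp h2
    exact Or.inr ⟨hc.symm, hv⟩

lemma perm3 {u v w a b c : ℝ} (h : ({u, v, w} : Multiset ℝ) = {a, b, c}) :
    (u=a∧v=b∧w=c)∨(u=a∧v=c∧w=b)∨(u=b∧v=a∧w=c)∨(u=b∧v=c∧w=a)∨(u=c∧v=a∧w=b)∨(u=c∧v=b∧w=a) := by
  have hmem : a ∈ ({u, v, w} : Multiset ℝ) := by rw [h]; simp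
  simp only [Multiset.insert_eq_cons, Multiset.mem_cons, Multiset.mem_singleton] at hmem
  simp only [Multiset.insert_eq_cons] at h
  rcases hmem with hu | hv | hw
  · rw [← hu] at h
    have h2 := (Multiset.cons_inj_right a).mp h
    rcases pair2 h2 with ⟨h3, h4⟩ | ⟨h3, h4⟩
    · exact Or.inl ⟨hu.symm, h3, h4⟩
    · exact Or.inr (Or.inl ⟨hu.symm, h3, h4⟩)
  · rw [← hv, Multiset.cons_swap] at h
    have h2 := (Multiset.cons_inj_right a).mp h
    rcases pair2 h2 with ⟨h3, h4⟩ | ⟨h3, h4⟩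
    · exact Or.inr (Or.inr (Or.inl ⟨h3, hv.symm, h4⟩))
    · exact Or.inr (Or.inr (Or.inr (Or.inr (Or.inl ⟨h3, hv.symm, h4⟩))))
  · rw [← hw] at h
    rw [show (u ::ₘ v ::ₘ {a} : Multiset ℝ) = a ::ₘ u ::ₘ {v} by
      simp only [← Multiset.cons_zero a, ← Multiset.cons_zero v]
      rw [Multiset.cons_swap v a, Multiset.cons_swap u a]] at h
    have h2 := (Multiset.cons_inj_right a).mp h
    rcases pair2 h2 with ⟨h3, h4⟩ | ⟨h3, h4⟩
    · exact Or.inr (Or.inr (Or.inr (Or.inl ⟨h3, h4, hw.symm⟩)))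
    · exact Or.inr (Or.inr (Or.inr (Or.inr (Or.inr ⟨h3, h4, hw.symm⟩))))

theorem stmt0 (a b c : ℝ) (ha : 0 < a) (hab : a ≤ b) (hbc : b ≤ c) (htri : c < a + b)
    (z₁ z₂ z₃ : ℝ × ℝ) (hcopy : IsCopy a b c z₁ z₂ z₃) :
    (|z₁.2 - z₂.2| = a ∨ |z₁.2 - z₂.2| = b ∨ |z₁.2 - z₂.2| = c) ∨
    (|z₂.2 - z₃.2| = a ∨ |z₂.2 - z₃.2| = b ∨ |z₂.2 - z₃.2| = c) ∨
    (|z₃.2 - z₁.2| = a ∨ |z₃.2 - z₁.2| = b ∨ |z₃.2 - z₁.2| = c) := by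
  by_contra hcon
  push_neg at hcon
  obtain ⟨⟨h1a, h1b, h1c⟩, ⟨h2a, h2b, h2c⟩, ⟨h3a, h3b, h3c⟩⟩ := hcon
  unfold IsCopy at hcopy
  -- each distInf is one of a, b, c
  have mem1 : distInf z₁ z₂ = a ∨ distInf z₁ z₂ = b ∨ distInf z₁ z₂ = c := by
    have : distInf z₁ z₂ ∈ ({a, b, c} : Multiset ℝ) := by rw [← hcopy]; simp
    simpa using this
  have mem2 : distInf z₂ z₃ = a ∨ distInf z₂ z₃ = b ∨ distInf z₂ z₃ = c := by
    have : distInf z₂ z₃ ∈ ({a, b, c} : Multiset ℝ) := by rw [← hcopy]; simp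
    simpa using this
  have mem3 : distInf z₃ z₁ = a ∨ distInf z₃ z₁ = b ∨ distInf z₃ z₁ = c := by
    have : distInf z₃ z₁ ∈ ({a, b, c} : Multiset ℝ) := by rw [← hcopy]; simp
    simpa using this
  -- hence each distInf equals the |x-difference|
  have e1 : distInf z₁ z₂ = |z₁.1 - z₂.1| := by
    rcases max_cases |z₁.1 - z₂.1| |z₁.2 - z₂.2| with ⟨h, -⟩ | ⟨h, -⟩
    · exact h
    · exfalso
      have hy : |z₁.2 - z₂.2| = distInf z₁ z₂ := h.symm
      rcases mem1 with h' | h' | h'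
      · exact h1a (hy.trans h')
      · exact h1b (hy.trans h')
      · exact h1c (hy.trans h')
  have e2 : distInf z₂ z₃ = |z₂.1 - z₃.1| := by
    rcases max_cases |z₂.1 - z₃.1| |z₂.2 - z₃.2| with ⟨h, -⟩ | ⟨h, -⟩
    · exact h
    · exfalso
      have hy : |z₂.2 - z₃.2| = distInf z₂ z₃ := h.symm
      rcases mem2 with h' | h' | h'
      · exact h2a (hy.trans h')
      · exact h2b (hy.trans h')
      · exact h2c (hy.trans h')
  have e3 : distInf z₃ z₁ = |z₃.1 - z₁.1| := by
    rcases max_cases |z₃.1 - z₁.1| |z₃.2 - z₁.2| with ⟨h, -⟩ | ⟨h, -⟩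
    · exact h
    · exfalso
      have hy : |z₃.2 - z₁.2| = distInf z₃ z₁ := h.symm
      rcases mem3 with h' | h' | h'
      · exact h3a (hy.trans h')
      · exact h3b (hy.trans h')
      · exact h3c (hy.trans h')
  rw [e1, e2, e3] at hcopy
  have hsum : (z₁.1 - z₂.1) + (z₂.1 - z₃.1) + (z₃.1 - z₁.1) = 0 := by ring
  rcases perm3 hcopy with ⟨p1,p2,p3⟩|⟨p1,p2,p3⟩|⟨p1,p2,p3⟩|⟨p1,p2,p3⟩|⟨p1,p2,p3⟩|⟨p1,p2,p3⟩ <;>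
  · rcases abs_cases (z₁.1 - z₂.1) with ⟨q1, -⟩ | ⟨q1, -⟩ <;>
    rcases abs_cases (z₂.1 - z₃.1) with ⟨q2, -⟩ | ⟨q2, -⟩ <;>
    rcases abs_cases (z₃.1 - z₁.1) with ⟨q3, -⟩ | ⟨q3, -⟩ <;>
    rw [q1] at p1 <;> rw [q2] at p2 <;> rw [q3] at p3 <;> linarith
end

section
/- Let a ≤ b ≤ c be positive reals with c < a + b, and let z₁, z₂, z₃ ∈ ℝ² be a copy of the triangle T(a,b,c) in the ℓ∞ metric. Then at least one of the quantities |x₁+y₁−x₂−y₂|, |x₂+y₂−x₃−y₃|, |x₃+y₃−x₁−y₁| equals a+b−c, c+a−b, or b+c−a. -/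
lemma two_mul_max_abs (s t : ℝ) : |s + t| + |s - t| = 2 * max |s| |t| := by
  rcases le_total |s| |t| with h | h
  · rw [max_eq_right h]
    rcases abs_cases (s+t) with ⟨e1,f1⟩|⟨e1,f1⟩ <;> rcases abs_cases (s-t) with ⟨e2,f2⟩|⟨e2,f2⟩ <;>
      rcases abs_cases s with ⟨e3,f3⟩|⟨e3,f3⟩ <;> rcases abs_cases t with ⟨e4,f4⟩|⟨e4,f4⟩ <;>
      rw [e3] at h <;> rw [e4] at h ⊢ <;> rw [e1, e2] <;> linarith
  · rw [max_eq_left h]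
    rcases abs_cases (s+t) with ⟨e1,f1⟩|⟨e1,f1⟩ <;> rcases abs_cases (s-t) with ⟨e2,f2⟩|⟨e2,f2⟩ <;>
      rcases abs_cases s with ⟨e3,f3⟩|⟨e3,f3⟩ <;> rcases abs_cases t with ⟨e4,f4⟩|⟨e4,f4⟩ <;>
      rw [e4] at h <;> rw [e3] at h ⊢ <;> rw [e1, e2] <;> linarith

lemma main_case (d1 d2 d3 p q P Q S : ℝ)
    (h1 : |p| + |P| = 2*d1) (h2 : |q| + |Q| = 2*d2) (h3 : |p+q| + |P+Q| = 2*d3)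
    (hS : d1 + d2 + d3 = S)
    (g1 : 0 < S - 2*d1) (g2 : 0 < S - 2*d2) (g3 : 0 < S - 2*d3) :
    |p| = S - 2*d2 ∨ |p| = S - 2*d3 ∨ |q| = S - 2*d1 ∨ |q| = S - 2*d3 ∨
      |p+q| = S - 2*d1 ∨ |p+q| = S - 2*d2 := by
  rcases abs_cases p with ⟨e1,f1⟩|⟨e1,f1⟩ <;> rcases abs_cases q with ⟨e2,f2⟩|⟨e2,f2⟩ <;>
    rcases abs_cases (p+q) with ⟨e3,f3⟩|⟨e3,f3⟩ <;>
    rcases abs_cases P with ⟨e4,f4⟩|⟨e4,f4⟩ <;> rcases abs_cases Q with ⟨e5,f5⟩|⟨e5,f5⟩ <;>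
    rcases abs_cases (P+Q) with ⟨e6,f6⟩|⟨e6,f6⟩ <;>
    rw [e1, e4] at h1 <;> rw [e2, e5] at h2 <;> rw [e3, e6] at h3 <;> rw [e1, e2, e3] <;>
    first
      | (left; linarith)
      | (right; left; linarith)
      | (right; right; left; linarith)
      | (right; right; right; left; linarith)
      | (right; right; right; right; left; linarith)
      | (right; right; right; right; right; linarith)

theorem stmt1 (a b c : ℝ) (ha : 0 < a) (hab : a ≤ b) (hbc : b ≤ c) (htri : c < a + b)
    (z₁ z₂ z₃ : ℝ × ℝ) (hcopy : IsCopy a b c z₁ z₂ z₃) :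
    (|z₁.1 + z₁.2 - z₂.1 - z₂.2| = a + b - c ∨ |z₁.1 + z₁.2 - z₂.1 - z₂.2| = c + a - b ∨
      |z₁.1 + z₁.2 - z₂.1 - z₂.2| = b + c - a) ∨
    (|z₂.1 + z₂.2 - z₃.1 - z₃.2| = a + b - c ∨ |z₂.1 + z₂.2 - z₃.1 - z₃.2| = c + a - b ∨
      |z₂.1 + z₂.2 - z₃.1 - z₃.2| = b + c - a) ∨
    (|z₃.1 + z₃.2 - z₁.1 - z₁.2| = a + b - c ∨ |z₃.1 + z₃.2 - z₁.1 - z₁.2| = c + a - b ∨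
      |z₃.1 + z₃.2 - z₁.1 - z₁.2| = b + c - a) := by
  unfold IsCopy at hcopy
  set d1 := distInf z₁ z₂ with hd1def
  set d2 := distInf z₂ z₃ with hd2def
  set d3 := distInf z₃ z₁ with hd3def
  have hsum : d1 + d2 + d3 = a + b + c := by
    have := congrArg Multiset.sum hcopy
    simp [Multiset.sum_cons] at this
    linarith
  have hm1 : d1 = a ∨ d1 = b ∨ d1 = c := by
    have : d1 ∈ ({a, b, c} : Multiset ℝ) := by rw [← hcopy]; simp
    simpa using this
  have hm2 : d2 = a ∨ d2 = b ∨ d2 = c := by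
    have : d2 ∈ ({a, b, c} : Multiset ℝ) := by rw [← hcopy]; simp
    simpa using this
  have hm3 : d3 = a ∨ d3 = b ∨ d3 = c := by
    have : d3 ∈ ({a, b, c} : Multiset ℝ) := by rw [← hcopy]; simp
    simpa using this
  have g1 : 0 < (a+b+c) - 2*d1 := by rcases hm1 with e|e|e <;> rw [e] <;> linarith
  have g2 : 0 < (a+b+c) - 2*d2 := by rcases hm2 with e|e|e <;> rw [e] <;> linarith
  have g3 : 0 < (a+b+c) - 2*d3 := by rcases hm3 with e|e|e <;> rw [e] <;> linarith
  set p := z₁.1 + z₁.2 - z₂.1 - z₂.2 with hp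
  set q := z₂.1 + z₂.2 - z₃.1 - z₃.2 with hq
  set P := z₁.1 - z₁.2 - (z₂.1 - z₂.2) with hP
  set Q := z₂.1 - z₂.2 - (z₃.1 - z₃.2) with hQ
  have h1 : |p| + |P| = 2 * d1 := by
    have := two_mul_max_abs (z₁.1 - z₂.1) (z₁.2 - z₂.2)
    have e1 : z₁.1 - z₂.1 + (z₁.2 - z₂.2) = p := by rw [hp]; ring
    have e2 : z₁.1 - z₂.1 - (z₁.2 - z₂.2) = P := by rw [hP]; ring
    rw [e1, e2] at this
    rw [this, hd1def, distInf]
  have h2 : |q| + |Q| = 2 * d2 := by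
    have := two_mul_max_abs (z₂.1 - z₃.1) (z₂.2 - z₃.2)
    have e1 : z₂.1 - z₃.1 + (z₂.2 - z₃.2) = q := by rw [hq]; ring
    have e2 : z₂.1 - z₃.1 - (z₂.2 - z₃.2) = Q := by rw [hQ]; ring
    rw [e1, e2] at this
    rw [this, hd2def, distInf]
  have h3 : |p + q| + |P + Q| = 2 * d3 := by
    have := two_mul_max_abs (z₁.1 - z₃.1) (z₁.2 - z₃.2)
    have e1 : z₁.1 - z₃.1 + (z₁.2 - z₃.2) = p + q := by rw [hp, hq]; ring
    have e2 : z₁.1 - z₃.1 - (z₁.2 - z₃.2) = P + Q := by rw [hP, hQ]; ring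
    rw [e1, e2] at this
    rw [this, hd3def, distInf, abs_sub_comm z₃.1 z₁.1, abs_sub_comm z₃.2 z₁.2]
  have e31 : z₃.1 + z₃.2 - z₁.1 - z₁.2 = -(p + q) := by rw [hp, hq]; ring
  rw [e31, abs_neg]
  rcases main_case d1 d2 d3 p q P Q (a+b+c) h1 h2 h3 hsum g1 g2 g3 with h|h|h|h|h|h
  · refine Or.inl ?_
    rcases hm2 with e|e|e <;> rw [e] at h <;>
      first | (left; linarith) | (right; left; linarith) | (right; right; linarith)
  · refine Or.inl ?_
    rcases hm3 with e|e|e <;> rw [e] at h <;>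
      first | (left; linarith) | (right; left; linarith) | (right; right; linarith)
  · refine Or.inr (Or.inl ?_)
    rcases hm1 with e|e|e <;> rw [e] at h <;>
      first | (left; linarith) | (right; left; linarith) | (right; right; linarith)
  · refine Or.inr (Or.inl ?_)
    rcases hm3 with e|e|e <;> rw [e] at h <;>
      first | (left; linarith) | (right; left; linarith) | (right; right; linarith)
  · refine Or.inr (Or.inr ?_)
    rcases hm1 with e|e|e <;> rw [e] at h <;>
      first | (left; linarith) | (right; left; linarith) | (right; right; linarith)
  · refine Or.inr (Or.inr ?_)
    rcases hm2 with e|e|e <;> rw [e] at h <;>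
      first | (left; linarith) | (right; left; linarith) | (right; right; linarith)
end

section
/- Let a ≤ b ≤ c be positive reals with c < a + b, and let C̄ : ℝ → κ be a coloring of the line such that no two points of ℝ at distance a, b, or c apart receive the same color. Then the coloring C of ℝ² defined by C(x,y) = C̄(y) contains no monochromatic copy of T(a,b,c) in the ℓ∞ metric. -/
theorem stmt2 {κ : Type*} (a b c : ℝ) (ha : 0 < a) (hab : a ≤ b) (hbc : b ≤ c)
    (htri : c < a + b) (Cbar : ℝ → κ)
    (hC : ∀ y y' : ℝ, (|y - y'| = a ∨ |y - y'| = b ∨ |y - y'| = c) → Cbar y ≠ Cbar y') :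
    ∀ z₁ z₂ z₃ : ℝ × ℝ, IsCopy a b c z₁ z₂ z₃ →
      ¬(Cbar z₁.2 = Cbar z₂.2 ∧ Cbar z₂.2 = Cbar z₃.2) := by
  intro z₁ z₂ z₃ hcopy ⟨h12, h23⟩
  have h31 : Cbar z₃.2 = Cbar z₁.2 := (h12.trans h23).symm
  unfold IsCopy at hcopy
  set d₁ := distInf z₁ z₂ with hd₁
  set d₂ := distInf z₂ z₃ with hd₂
  set d₃ := distInf z₃ z₁ with hd₃
  have hsum : d₁ + d₂ + d₃ = a + b + c := by
    have := congrArg Multiset.sum hcopy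
    simp at this; linarith
  have hmem : ∀ d : ℝ, d ∈ ({d₁, d₂, d₃} : Multiset ℝ) → d = a ∨ d = b ∨ d = c := by
    intro d hd
    rw [hcopy] at hd
    simpa using hd
  have key : ∀ (p q : ℝ × ℝ), Cbar p.2 = Cbar q.2 →
      (distInf p q = a ∨ distInf p q = b ∨ distInf p q = c) →
      |p.1 - q.1| = distInf p q := by
    intro p q hcol hd
    have hy : ¬(|p.2 - q.2| = a ∨ |p.2 - q.2| = b ∨ |p.2 - q.2| = c) :=
      fun h => hC _ _ h hcol
    have hyne : |p.2 - q.2| ≠ distInf p q := by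
      intro h; exact hy (h ▸ hd)
    have hle : |p.2 - q.2| ≤ distInf p q := le_max_right _ _
    have := max_cases |p.1 - q.1| |p.2 - q.2|
    rcases this with ⟨h1, _⟩ | ⟨h1, _⟩
    · exact h1.symm ▸ rfl
    · exact absurd h1.symm hyne
  have e1 : |z₁.1 - z₂.1| = d₁ := key _ _ h12 (hmem d₁ (by simp))
  have e2 : |z₂.1 - z₃.1| = d₂ := key _ _ h23 (hmem d₂ (by simp))
  have e3 : |z₃.1 - z₁.1| = d₃ := key _ _ h31 (hmem d₃ (by simp))
  have m1 := hmem d₁ (by simp)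
  have m2 := hmem d₂ (by simp)
  have m3 := hmem d₃ (by simp)
  have b1 : a ≤ d₁ ∧ d₁ ≤ c := by rcases m1 with h|h|h <;> constructor <;> linarith
  have b2 : a ≤ d₂ ∧ d₂ ≤ c := by rcases m2 with h|h|h <;> constructor <;> linarith
  have b3 : a ≤ d₃ ∧ d₃ ≤ c := by rcases m3 with h|h|h <;> constructor <;> linarith
  have hz : (z₁.1 - z₂.1) + (z₂.1 - z₃.1) + (z₃.1 - z₁.1) = 0 := by ring
  rcases abs_cases (z₁.1 - z₂.1) with ⟨u1, _⟩ | ⟨u1, _⟩ <;>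
  rcases abs_cases (z₂.1 - z₃.1) with ⟨u2, _⟩ | ⟨u2, _⟩ <;>
  rcases abs_cases (z₃.1 - z₁.1) with ⟨u3, _⟩ | ⟨u3, _⟩ <;>
  rw [u1] at e1 <;> rw [u2] at e2 <;> rw [u3] at e3 <;>
  obtain ⟨b1a, b1c⟩ := b1 <;> obtain ⟨b2a, b2c⟩ := b2 <;> obtain ⟨b3a, b3c⟩ := b3 <;>
  linarith
end

section
/- Let a ≤ b ≤ c be positive reals with c < a + b, and let C' : ℝ → κ be a coloring of the line such that no two points at distance a+b−c, c+a−b, or b+c−a apart receive the same color. Then the coloring C of ℝ² defined by C(x,y) = C'(x+y) contains no monochromatic copy of T(a,b,c) in the ℓ∞ metric. -/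
lemma sum3_abs {x y z : ℝ} (h : x + y + z = 0) :
    |x| = |y| + |z| ∨ |y| = |x| + |z| ∨ |z| = |x| + |y| := by
  rcases abs_cases x with ⟨hx, hx'⟩ | ⟨hx, hx'⟩ <;>
  rcases abs_cases y with ⟨hy, hy'⟩ | ⟨hy, hy'⟩ <;>
  rcases abs_cases z with ⟨hz, hz'⟩ | ⟨hz, hz'⟩ <;>
  first
    | (left; linarith)
    | (right; left; linarith)
    | (right; right; linarith)

lemma abs_key (p q : ℝ) : |p + q| + |p - q| = 2 * max |p| |q| := by
  rcases abs_cases (p + q) with ⟨h1, h1'⟩ | ⟨h1, h1'⟩ <;>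
  rcases abs_cases (p - q) with ⟨h2, h2'⟩ | ⟨h2, h2'⟩ <;>
  rcases abs_cases p with ⟨h3, h3'⟩ | ⟨h3, h3'⟩ <;>
  rcases abs_cases q with ⟨h4, h4'⟩ | ⟨h4, h4'⟩ <;>
  rcases max_cases |p| |q| with ⟨h5, h5'⟩ | ⟨h5, h5'⟩ <;>
  linarith

lemma key2 (p q : ℝ × ℝ) :
    |(p.1 + p.2) - (q.1 + q.2)| + |(p.1 - p.2) - (q.1 - q.2)| = 2 * distInf p q := by
  have h := abs_key (p.1 - q.1) (p.2 - q.2)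
  rw [show (p.1 + p.2) - (q.1 + q.2) = (p.1 - q.1) + (p.2 - q.2) by ring,
      show (p.1 - p.2) - (q.1 - q.2) = (p.1 - q.1) - (p.2 - q.2) by ring]
  exact h

theorem stmt3 {κ : Type*} (a b c : ℝ) (ha : 0 < a) (hab : a ≤ b) (hbc : b ≤ c)
    (htri : c < a + b) (C' : ℝ → κ)
    (hC : ∀ y y' : ℝ, (|y - y'| = a + b - c ∨ |y - y'| = c + a - b ∨ |y - y'| = b + c - a) →
      C' y ≠ C' y') :
    ∀ z₁ z₂ z₃ : ℝ × ℝ, IsCopy a b c z₁ z₂ z₃ →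
      ¬(C' (z₁.1 + z₁.2) = C' (z₂.1 + z₂.2) ∧ C' (z₂.1 + z₂.2) = C' (z₃.1 + z₃.2)) := by
  intro z₁ z₂ z₃ hcopy
  rintro ⟨h12, h23⟩
  unfold IsCopy at hcopy
  set d₁ := distInf z₁ z₂ with hd₁
  set d₂ := distInf z₂ z₃ with hd₂
  set d₃ := distInf z₃ z₁ with hd₃
  -- sum of distances
  have hsum : d₁ + d₂ + d₃ = a + b + c := by
    have h' := congrArg Multiset.sum hcopy
    simp [Multiset.sum_cons] at h'
    linarith
  -- memberships
  have hm1 : d₁ = a ∨ d₁ = b ∨ d₁ = c := by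
    have : d₁ ∈ ({a, b, c} : Multiset ℝ) := hcopy ▸ (by simp)
    simpa using this
  have hm2 : d₂ = a ∨ d₂ = b ∨ d₂ = c := by
    have : d₂ ∈ ({a, b, c} : Multiset ℝ) := hcopy ▸ (by simp)
    simpa using this
  have hm3 : d₃ = a ∨ d₃ = b ∨ d₃ = c := by
    have : d₃ ∈ ({a, b, c} : Multiset ℝ) := hcopy ▸ (by simp)
    simpa using this
  have hlt : ∀ dd : ℝ, (dd = a ∨ dd = b ∨ dd = c) → dd < (a + b + c) / 2 := by
    rintro dd (rfl | rfl | rfl) <;> linarith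
  set s₁ := z₁.1 + z₁.2 with hs₁
  set s₂ := z₂.1 + z₂.2 with hs₂
  set s₃ := z₃.1 + z₃.2 with hs₃
  set t₁ := z₁.1 - z₁.2 with ht₁
  set t₂ := z₂.1 - z₂.2 with ht₂
  set t₃ := z₃.1 - z₃.2 with ht₃
  have e₁ : |s₁ - s₂| + |t₁ - t₂| = 2 * d₁ := key2 z₁ z₂
  have e₂ : |s₂ - s₃| + |t₂ - t₃| = 2 * d₂ := key2 z₂ z₃
  have e₃ : |s₃ - s₁| + |t₃ - t₁| = 2 * d₃ := key2 z₃ z₁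
  have hσ := sum3_abs (x := s₁ - s₂) (y := s₂ - s₃) (z := s₃ - s₁) (by ring)
  have hτ := sum3_abs (x := t₁ - t₂) (y := t₂ - t₃) (z := t₃ - t₁) (by ring)
  -- the key contradiction-maker
  have hval : ∀ (y y' dd : ℝ), (dd = a ∨ dd = b ∨ dd = c) →
      |y - y'| = a + b + c - 2 * dd → C' y = C' y' → False := by
    rintro y y' dd (rfl | rfl | rfl) habs hcc
    · exact hC y y' (Or.inr (Or.inr (by linarith))) hcc
    · exact hC y y' (Or.inr (Or.inl (by linarith))) hcc
    · exact hC y y' (Or.inl (by linarith)) hcc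
  have hlt1 := hlt d₁ hm1
  have hlt2 := hlt d₂ hm2
  have hlt3 := hlt d₃ hm3
  have c12 : C' s₁ = C' s₂ := h12
  have c23 : C' s₂ = C' s₃ := h23
  have c31 : C' s₃ = C' s₁ := (c12.trans c23).symm
  rcases hτ with hp | hp | hp <;> rcases hσ with hq | hq | hq
  · linarith
  · exact hval s₃ s₁ d₁ hm1 (by linarith) c31
  · exact hval s₂ s₃ d₁ hm1 (by linarith) c23
  · exact hval s₃ s₁ d₂ hm2 (by linarith) c31
  · linarith
  · exact hval s₁ s₂ d₂ hm2 (by linarith) c12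
  · exact hval s₂ s₃ d₃ hm3 (by linarith) c23
  · exact hval s₁ s₂ d₃ hm3 (by linarith) c12
  · linarith
end

section
/- Let a ≤ b ≤ c be positive reals with c < a + b, and let C : ℝ² → Bool be a two-coloring with no monochromatic copy of T(a,b,c) in the ℓ∞ metric. If the vector (a−b, −c) is not an anti-period of C (i.e., there exist x, y with C(x,y) = C(x+a−b, y−c)), then there exists a monochromatic vertical segment of length a+b−c, namely a point (x₀,y₀) such that all points (x₀, y) with y₀ ≤ y ≤ y₀ + (a+b−c) have the same color. -/
theorem stmt5 (a b c : ℝ) (ha : 0 < a) (hab : a ≤ b) (hbc : b ≤ c) (htri : c < a + b)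
    (C : ℝ × ℝ → Bool) (hmono : NoMonoCopy a b c C)
    (hnap : ∃ x y : ℝ, C (x, y) = C (x + a - b, y - c)) :
    ∃ x₀ y₀ : ℝ, ∀ y : ℝ, y₀ ≤ y → y ≤ y₀ + (a + b - c) → C (x₀, y) = C (x₀, y₀) := by
  obtain ⟨x, y, hxy⟩ := hnap
  refine ⟨x + a, y - a, fun y' h1 h2 => ?_⟩
  -- key: any point on the segment has color ≠ C (x, y)
  have key : ∀ y'' : ℝ, y - a ≤ y'' → y'' ≤ y - a + (a + b - c) →
      C (x + a, y'') ≠ C (x, y) := by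
    intro y'' hl hr
    have hcopy : IsCopy a b c (x + a, y'') (x, y) (x + a - b, y - c) := by
      unfold IsCopy distInf
      have d1 : max |(x + a, y'').1 - (x, y).1| |(x + a, y'').2 - (x, y).2| = a := by
        simp only
        rw [show (x + a) - x = a by ring, abs_of_pos ha, max_eq_left]
        rw [abs_le]; constructor <;> linarith
      have d2 : max |(x, y).1 - (x + a - b, y - c).1| |(x, y).2 - (x + a - b, y - c).2| = c := by
        simp only
        rw [show x - (x + a - b) = b - a by ring, show y - (y - c) = c by ring,
          abs_of_nonneg (by linarith : (0:ℝ) ≤ b - a), abs_of_nonneg (by linarith : (0:ℝ) ≤ c),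
          max_eq_right (by linarith)]
      have d3 : max |(x + a - b, y - c).1 - (x + a, y'').1| |(x + a - b, y - c).2 - (x + a, y'').2| = b := by
        simp only
        rw [show (x + a - b) - (x + a) = -b by ring, abs_neg,
          abs_of_nonneg (by linarith : (0:ℝ) ≤ b), max_eq_left]
        rw [abs_le]; constructor <;> linarith
      rw [d1, d2, d3]
      exact congrArg (a ::ₘ ·) (Multiset.cons_swap c b 0)
    have := hmono _ _ _ hcopy
    intro hEq
    exact this ⟨hEq, hxy⟩
  have h0 : C (x + a, y - a) ≠ C (x, y) := key _ le_rfl (by linarith)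
  have h1' : C (x + a, y') ≠ C (x, y) := key _ h1 h2
  revert h0 h1'
  cases C (x + a, y') <;> cases C (x + a, y - a) <;> cases C (x, y) <;> simp
end

section
/- Let a ≤ b ≤ c be positive reals with c < a + b, and let C : ℝ² → Bool be a two-coloring with no monochromatic copy of T(a,b,c). If one of the four vectors (a, c−b), (−a, c−b), (c−b, a), (c−b, −a) is not an anti-period of C, then there exists a monochromatic axis-parallel segment of length b+c−a. -/
lemma key_horiz (a b c : ℝ) (ha : 0 < a) (hab : a ≤ b) (hbc : b ≤ c) (htri : c < a + b)
    (C : ℝ × ℝ → Bool) (hmono : NoMonoCopy a b c C)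
    (p q : ℝ × ℝ) (hpq : C p = C q) (hy : q.2 - p.2 = c - b) (hx : |q.1 - p.1| = a) :
    ∃ x₀ y₀ : ℝ, ∀ t ∈ Set.Icc (0:ℝ) (b + c - a), C (x₀ + t, y₀) = C (x₀, y₀) := by
  set x₀ := max (p.1 - c) (q.1 - b) with hx₀
  set y₀ := p.2 + c with hy₀
  have hsign : q.1 - p.1 = a ∨ q.1 - p.1 = -a := abs_eq ha.le |>.1 hx
  have hub1 : x₀ + (b + c - a) ≤ p.1 + c := by
    rcases hsign with h | h <;>
      (have : x₀ ≤ p.1 + c - (b + c - a) := max_le (by linarith) (by linarith); linarith)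
  have hub2 : x₀ + (b + c - a) ≤ q.1 + b := by
    rcases hsign with h | h <;>
      (have : x₀ ≤ q.1 + b - (b + c - a) := max_le (by linarith) (by linarith); linarith)
  have hL : 0 ≤ b + c - a := by linarith
  -- main claim : every point on the segment is colored !C q
  have claim : ∀ x : ℝ, p.1 - c ≤ x → q.1 - b ≤ x → x ≤ p.1 + c → x ≤ q.1 + b →
      C (x, y₀) = !C q := by
    intro x h1 h2 h3 h4
    set r : ℝ × ℝ := (x, y₀) with hr
    have d1 : distInf p q = a := by
      unfold distInf
      rw [abs_sub_comm p.1 q.1, hx, abs_sub_comm p.2 q.2, hy, abs_of_nonneg (by linarith)]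
      exact max_eq_left (by linarith)
    have d2 : distInf q r = b := by
      show max |q.1 - x| |q.2 - y₀| = b
      have h5 : q.2 - y₀ = -b := by rw [hy₀]; linarith
      have h6 : |q.1 - x| ≤ b := abs_le.2 ⟨by linarith, by linarith⟩
      rw [h5, abs_neg, abs_of_nonneg (show (0:ℝ) ≤ b by linarith)]
      exact max_eq_right h6
    have d3 : distInf r p = c := by
      show max |x - p.1| |y₀ - p.2| = c
      have h5 : y₀ - p.2 = c := by rw [hy₀]; ring
      have h6 : |x - p.1| ≤ c := abs_le.2 ⟨by linarith, by linarith⟩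
      rw [h5, abs_of_nonneg (show (0:ℝ) ≤ c by linarith)]
      exact max_eq_right h6
    have hcopy : IsCopy a b c p q r := by
      unfold IsCopy
      rw [d1, d2, d3]
    have hne := hmono p q r hcopy
    have : C q ≠ C r := fun h => hne ⟨hpq, h⟩
    rw [Bool.eq_not_iff]
    exact fun h => this h.symm
  refine ⟨x₀, y₀, fun t ht => ?_⟩
  obtain ⟨ht0, htL⟩ := ht
  have e1 : C (x₀ + t, y₀) = !C q :=
    claim _ (by linarith [le_max_left (p.1 - c) (q.1 - b)])
      (by linarith [le_max_right (p.1 - c) (q.1 - b)]) (by linarith) (by linarith)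
  have e2 : C (x₀, y₀) = !C q := by
    have := claim x₀ (le_max_left _ _) (le_max_right _ _) (by linarith) (by linarith)
    simpa using this
  rw [e1, e2]

lemma distInf_swap (p q : ℝ × ℝ) : distInf (p.2, p.1) (q.2, q.1) = distInf p q := by
  unfold distInf
  exact max_comm _ _

theorem stmt6 (a b c : ℝ) (ha : 0 < a) (hab : a ≤ b) (hbc : b ≤ c) (htri : c < a + b)
    (C : ℝ × ℝ → Bool) (hmono : NoMonoCopy a b c C)
    (hnap : ¬ IsAntiPeriod C (a, c - b) ∨ ¬ IsAntiPeriod C (-a, c - b) ∨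
            ¬ IsAntiPeriod C (c - b, a) ∨ ¬ IsAntiPeriod C (c - b, -a)) :
    MonoSeg C (b + c - a) := by
  have hswap : NoMonoCopy a b c (fun w : ℝ × ℝ => C (w.2, w.1)) := by
    intro z₁ z₂ z₃ hcopy hcol
    apply hmono (z₁.2, z₁.1) (z₂.2, z₂.1) (z₃.2, z₃.1) _ hcol
    unfold IsCopy at hcopy ⊢
    rw [distInf_swap, distInf_swap, distInf_swap]
    exact hcopy
  rcases hnap with h | h | h | h <;> (unfold IsAntiPeriod at h; push_neg at h; obtain ⟨z, hz⟩ := h)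
  · obtain ⟨x₀, y₀, hseg⟩ := key_horiz a b c ha hab hbc htri C hmono z (z + (a, c - b))
      hz.symm (by simp) (by rw [Prod.fst_add]; simp [abs_of_pos ha])
    exact ⟨x₀, y₀, Or.inl hseg⟩
  · obtain ⟨x₀, y₀, hseg⟩ := key_horiz a b c ha hab hbc htri C hmono z (z + (-a, c - b))
      hz.symm (by simp) (by rw [Prod.fst_add]; simp [abs_of_pos ha])
    exact ⟨x₀, y₀, Or.inl hseg⟩
  · obtain ⟨x₀, y₀, hseg⟩ := key_horiz a b c ha hab hbc htri
      (fun w : ℝ × ℝ => C (w.2, w.1)) hswap (z.2, z.1) (z.2 + a, z.1 + (c - b))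
      hz.symm (by simp) (by simp [abs_of_pos ha])
    refine ⟨y₀, x₀, Or.inr fun t ht => ?_⟩
    simpa using hseg t ht
  · obtain ⟨x₀, y₀, hseg⟩ := key_horiz a b c ha hab hbc htri
      (fun w : ℝ × ℝ => C (w.2, w.1)) hswap (z.2, z.1) (z.2 + -a, z.1 + (c - b))
      hz.symm (by simp) (by simp [abs_of_pos ha])
    refine ⟨y₀, x₀, Or.inr fun t ht => ?_⟩
    simpa using hseg t ht
end

section
/- Let a ≤ b ≤ c be positive reals with c < a + b, and let C : ℝ² → Bool be a two-coloring with no monochromatic copy of T(a,b,c). Suppose no axis-parallel segment of length c+a−b is monochromatic. Then all eight vectors (±a, c−b), (c−b, ±a), (±b, a−c), (a−c, ±b) are anti-periods of C, and all six vectors (2a,0), (2b,0), (2c,0), (0,2a), (0,2b), (0,2c) are periods of C. -/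
lemma distInf_mk (x y u v : ℝ) : distInf (x, y) (u, v) = max |x - u| |y - v| := rfl

lemma distInf_negx (p q : ℝ × ℝ) :
    distInf (-p.1, p.2) (-q.1, q.2) = distInf p q := by
  simp [distInf, neg_add_eq_sub, neg_sub_neg, abs_sub_comm q.1 p.1]

lemma distInf_negy (p q : ℝ × ℝ) :
    distInf (p.1, -p.2) (q.1, -q.2) = distInf p q := by
  simp [distInf, neg_add_eq_sub, neg_sub_neg, abs_sub_comm q.2 p.2]

lemma mono_negx {a b c : ℝ} {C : ℝ × ℝ → Bool} (h : NoMonoCopy a b c C) :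
    NoMonoCopy a b c (fun p => C (-p.1, p.2)) := by
  intro z₁ z₂ z₃ hcopy
  exact h (-z₁.1, z₁.2) (-z₂.1, z₂.2) (-z₃.1, z₃.2) (by
    unfold IsCopy at hcopy ⊢
    rw [distInf_negx, distInf_negx, distInf_negx]; exact hcopy)

lemma mono_negy {a b c : ℝ} {C : ℝ × ℝ → Bool} (h : NoMonoCopy a b c C) :
    NoMonoCopy a b c (fun p => C (p.1, -p.2)) := by
  intro z₁ z₂ z₃ hcopy
  exact h (z₁.1, -z₁.2) (z₂.1, -z₂.2) (z₃.1, -z₃.2) (by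
    unfold IsCopy at hcopy ⊢
    rw [distInf_negy, distInf_negy, distInf_negy]; exact hcopy)

lemma mono_swap {a b c : ℝ} {C : ℝ × ℝ → Bool} (h : NoMonoCopy a b c C) :
    NoMonoCopy a b c (fun p => C (p.2, p.1)) := by
  intro z₁ z₂ z₃ hcopy
  exact h (z₁.2, z₁.1) (z₂.2, z₂.1) (z₃.2, z₃.1) (by
    unfold IsCopy at hcopy ⊢
    rw [distInf_swap, distInf_swap, distInf_swap]; exact hcopy)

lemma seg_negx {L : ℝ} (hL : 0 ≤ L) {C : ℝ × ℝ → Bool}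
    (h : MonoSeg (fun p => C (-p.1, p.2)) L) : MonoSeg C L := by
  obtain ⟨x₀, y₀, h | h⟩ := h
  · refine ⟨-x₀ - L, y₀, Or.inl fun t ht => ?_⟩
    obtain ⟨ht0, htL⟩ := ht
    have h1 := h (L - t) ⟨by linarith, by linarith⟩
    have h2 := h L ⟨hL, le_refl L⟩
    simp only at h1 h2
    have e1 : -x₀ - L + t = -(x₀ + (L - t)) := by ring
    have e2 : -x₀ - L = -(x₀ + L) := by ring
    rw [e1, e2, h1, h2]
  · exact ⟨-x₀, y₀, Or.inr fun t ht => h t ht⟩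

lemma seg_negy {L : ℝ} (hL : 0 ≤ L) {C : ℝ × ℝ → Bool}
    (h : MonoSeg (fun p => C (p.1, -p.2)) L) : MonoSeg C L := by
  obtain ⟨x₀, y₀, h | h⟩ := h
  · exact ⟨x₀, -y₀, Or.inl fun t ht => h t ht⟩
  · refine ⟨x₀, -y₀ - L, Or.inr fun t ht => ?_⟩
    obtain ⟨ht0, htL⟩ := ht
    have h1 := h (L - t) ⟨by linarith, by linarith⟩
    have h2 := h L ⟨hL, le_refl L⟩
    simp only at h1 h2
    have e1 : -y₀ - L + t = -(y₀ + (L - t)) := by ring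
    have e2 : -y₀ - L = -(y₀ + L) := by ring
    rw [e1, e2, h1, h2]

lemma seg_swap {L : ℝ} {C : ℝ × ℝ → Bool}
    (h : MonoSeg (fun p => C (p.2, p.1)) L) : MonoSeg C L := by
  obtain ⟨x₀, y₀, h | h⟩ := h
  · exact ⟨y₀, x₀, Or.inr fun t ht => h t ht⟩
  · exact ⟨y₀, x₀, Or.inl fun t ht => h t ht⟩

lemma anti_negx {C : ℝ × ℝ → Bool} {v₁ v₂ : ℝ}
    (h : IsAntiPeriod (fun p => C (-p.1, p.2)) (v₁, v₂)) :
    IsAntiPeriod C (-v₁, v₂) := by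
  intro z
  have h' := h (-z.1, z.2)
  simp only [Prod.mk_add_mk] at h'
  have e : (-(-z.1 + v₁), z.2 + v₂) = z + (-v₁, v₂) := by
    simp [Prod.ext_iff]
    ring
  rw [e] at h'
  simpa using h'

lemma anti_negy {C : ℝ × ℝ → Bool} {v₁ v₂ : ℝ}
    (h : IsAntiPeriod (fun p => C (p.1, -p.2)) (v₁, v₂)) :
    IsAntiPeriod C (v₁, -v₂) := by
  intro z
  have h' := h (z.1, -z.2)
  simp only [Prod.mk_add_mk] at h'
  have e : (z.1 + v₁, -(-z.2 + v₂)) = z + (v₁, -v₂) := by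
    simp [Prod.ext_iff]
    ring
  rw [e] at h'
  simpa using h'

lemma anti_swap {C : ℝ × ℝ → Bool} {v₁ v₂ : ℝ}
    (h : IsAntiPeriod (fun p => C (p.2, p.1)) (v₁, v₂)) :
    IsAntiPeriod C (v₂, v₁) := by
  intro z
  have h' := h (z.2, z.1)
  simp only [Prod.mk_add_mk] at h'
  have e : (z.1 + v₂, z.2 + v₁) = z + (v₂, v₁) := by
    simp [Prod.ext_iff]
  rw [e] at h'
  simpa using h'

lemma anti_neg {C : ℝ × ℝ → Bool} {v : ℝ × ℝ}
    (h : IsAntiPeriod C v) : IsAntiPeriod C (-v) := by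
  intro z
  have h' := h (z + -v)
  rw [show z + -v + v = z by abel] at h'
  exact fun he => h' he.symm

lemma period_of_anti_anti {C : ℝ × ℝ → Bool} {u v : ℝ × ℝ}
    (hu : IsAntiPeriod C u) (hv : IsAntiPeriod C v) : IsPeriod C (u + v) := by
  intro z
  have h1 := hu (z + v)
  have h2 := hv z
  rw [show z + v + u = z + (u + v) by abel] at h1
  revert h1 h2
  cases C (z + (u + v)) <;> cases C (z + v) <;> cases C z <;> simp

lemma period_add {C : ℝ × ℝ → Bool} {u v : ℝ × ℝ}
    (hu : IsPeriod C u) (hv : IsPeriod C v) : IsPeriod C (u + v) := by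
  intro z
  rw [show z + (u + v) = z + v + u by abel, hu, hv]
lemma core1 (a b c : ℝ) (ha : 0 < a) (hab : a ≤ b) (hbc : b ≤ c) (htri : c < a + b)
    (C : ℝ × ℝ → Bool) (hmono : NoMonoCopy a b c C) (hseg : ¬ MonoSeg C (c + a - b)) :
    IsAntiPeriod C (a, c - b) := by
  intro z h
  apply hseg
  have key : ∀ x : ℝ, a - c ≤ x → x ≤ 2*a - b → C (z.1 + x, z.2 - b) ≠ C z := by
    intro x hx1 hx2 heq
    have hcopy : IsCopy a b c z (z + (a, c - b)) (z.1 + x, z.2 - b) := by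
      unfold IsCopy
      have d1 : distInf z (z + (a, c - b)) = a := by
        simp only [distInf, Prod.fst_add, Prod.snd_add]
        rw [show z.1 - (z.1 + a) = -a by ring, show z.2 - (z.2 + (c - b)) = -(c - b) by ring,
          abs_neg, abs_neg, abs_of_pos ha, abs_of_nonneg (by linarith),
          max_eq_left (by linarith)]
      have d2 : distInf (z + (a, c - b)) (z.1 + x, z.2 - b) = c := by
        simp only [distInf, Prod.fst_add, Prod.snd_add]
        rw [show z.1 + a - (z.1 + x) = a - x by ring,
          show z.2 + (c - b) - (z.2 - b) = c by ring,
          abs_of_nonneg (by linarith), abs_of_nonneg (by linarith : (0:ℝ) ≤ c),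
          max_eq_right (by linarith)]
      have d3 : distInf (z.1 + x, z.2 - b) z = b := by
        simp only [distInf]
        rw [show z.1 + x - z.1 = x by ring, show z.2 - b - z.2 = -b by ring,
          abs_neg, abs_of_nonneg (by linarith : (0:ℝ) ≤ b),
          max_eq_right (abs_le.mpr ⟨by linarith, by linarith⟩)]
      rw [d1, d2, d3]
      show (a ::ₘ c ::ₘ b ::ₘ 0) = (a ::ₘ b ::ₘ c ::ₘ 0)
      rw [Multiset.cons_swap c b]
    exact hmono z (z + (a, c - b)) (z.1 + x, z.2 - b) hcopy ⟨h.symm, h.trans heq.symm⟩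
  refine ⟨z.1 + (a - c), z.2 - b, Or.inl fun t ht => ?_⟩
  obtain ⟨ht0, htL⟩ := ht
  have k1 := key (a - c + t) (by linarith) (by linarith)
  have k0 := key (a - c) (le_refl _) (by linarith)
  rw [show z.1 + (a - c) + t = z.1 + (a - c + t) by ring]
  revert k0 k1
  cases C (z.1 + (a - c + t), z.2 - b) <;> cases C (z.1 + (a - c), z.2 - b) <;>
    cases C z <;> simp

lemma core2 (a b c : ℝ) (ha : 0 < a) (hab : a ≤ b) (hbc : b ≤ c) (htri : c < a + b)
    (C : ℝ × ℝ → Bool) (hmono : NoMonoCopy a b c C) (hseg : ¬ MonoSeg C (c + a - b)) :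
    IsAntiPeriod C (b, a - c) := by
  intro z h
  apply hseg
  have key : ∀ x : ℝ, b - c ≤ x → x ≤ a → C (z.1 + x, z.2 + a) ≠ C z := by
    intro x hx1 hx2 heq
    have hcopy : IsCopy a b c z (z + (b, a - c)) (z.1 + x, z.2 + a) := by
      unfold IsCopy
      have d1 : distInf z (z + (b, a - c)) = b := by
        simp only [distInf, Prod.fst_add, Prod.snd_add]
        rw [show z.1 - (z.1 + b) = -b by ring, show z.2 - (z.2 + (a - c)) = -(a - c) by ring,
          abs_neg, abs_neg, abs_of_pos (lt_of_lt_of_le ha hab), abs_of_nonpos (by linarith),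
          max_eq_left (by linarith)]
      have d2 : distInf (z + (b, a - c)) (z.1 + x, z.2 + a) = c := by
        simp only [distInf, Prod.fst_add, Prod.snd_add]
        rw [show z.1 + b - (z.1 + x) = b - x by ring,
          show z.2 + (a - c) - (z.2 + a) = -c by ring,
          abs_neg, abs_of_nonneg (by linarith), abs_of_nonneg (by linarith : (0:ℝ) ≤ c),
          max_eq_right (by linarith)]
      have d3 : distInf (z.1 + x, z.2 + a) z = a := by
        simp only [distInf]
        rw [show z.1 + x - z.1 = x by ring, show z.2 + a - z.2 = a by ring,
          abs_of_pos ha, max_eq_right (abs_le.mpr ⟨by linarith, by linarith⟩)]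
      rw [d1, d2, d3]
      show (b ::ₘ c ::ₘ a ::ₘ 0) = (a ::ₘ b ::ₘ c ::ₘ 0)
      rw [Multiset.cons_swap c a, Multiset.cons_swap b a]
    exact hmono z (z + (b, a - c)) (z.1 + x, z.2 + a) hcopy ⟨h.symm, h.trans heq.symm⟩
  refine ⟨z.1 + (b - c), z.2 + a, Or.inl fun t ht => ?_⟩
  obtain ⟨ht0, htL⟩ := ht
  have k1 := key (b - c + t) (by linarith) (by linarith)
  have k0 := key (b - c) (le_refl _) (by linarith)
  rw [show z.1 + (b - c) + t = z.1 + (b - c + t) by ring]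
  revert k0 k1
  cases C (z.1 + (b - c + t), z.2 + a) <;> cases C (z.1 + (b - c), z.2 + a) <;>
    cases C z <;> simp

theorem stmt8 (a b c : ℝ) (ha : 0 < a) (hab : a ≤ b) (hbc : b ≤ c) (htri : c < a + b)
    (C : ℝ × ℝ → Bool) (hmono : NoMonoCopy a b c C)
    (hseg : ¬ MonoSeg C (c + a - b)) :
    (IsAntiPeriod C (a, c - b) ∧ IsAntiPeriod C (-a, c - b) ∧
     IsAntiPeriod C (c - b, a) ∧ IsAntiPeriod C (c - b, -a) ∧
     IsAntiPeriod C (b, a - c) ∧ IsAntiPeriod C (-b, a - c) ∧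
     IsAntiPeriod C (a - c, b) ∧ IsAntiPeriod C (a - c, -b)) ∧
    (IsPeriod C (2 * a, 0) ∧ IsPeriod C (2 * b, 0) ∧ IsPeriod C (2 * c, 0) ∧
     IsPeriod C (0, 2 * a) ∧ IsPeriod C (0, 2 * b) ∧ IsPeriod C (0, 2 * c)) := by
  have hL : (0:ℝ) ≤ c + a - b := by linarith
  have A1 : IsAntiPeriod C (a, c - b) := core1 a b c ha hab hbc htri C hmono hseg
  have A2 : IsAntiPeriod C (-a, c - b) :=
    anti_negx (core1 a b c ha hab hbc htri (fun p => C (-p.1, p.2)) (mono_negx hmono)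
      (fun hm => hseg (seg_negx hL hm)))
  have A3 : IsAntiPeriod C (c - b, a) :=
    anti_swap (core1 a b c ha hab hbc htri (fun p => C (p.2, p.1)) (mono_swap hmono)
      (fun hm => hseg (seg_swap hm)))
  have A4 : IsAntiPeriod C (c - b, -a) := by
    have hy : IsAntiPeriod (fun p : ℝ × ℝ => C (p.1, -p.2)) (c - b, a) :=
      anti_swap (core1 a b c ha hab hbc htri (fun p => C (p.2, -p.1))
        (mono_swap (mono_negy hmono))
        (fun hm => hseg (seg_negy hL (seg_swap hm))))
    exact anti_negy hy
  have A5 : IsAntiPeriod C (b, a - c) := core2 a b c ha hab hbc htri C hmono hseg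
  have A6 : IsAntiPeriod C (-b, a - c) :=
    anti_negx (core2 a b c ha hab hbc htri (fun p => C (-p.1, p.2)) (mono_negx hmono)
      (fun hm => hseg (seg_negx hL hm)))
  have A7 : IsAntiPeriod C (a - c, b) :=
    anti_swap (core2 a b c ha hab hbc htri (fun p => C (p.2, p.1)) (mono_swap hmono)
      (fun hm => hseg (seg_swap hm)))
  have A8 : IsAntiPeriod C (a - c, -b) := by
    have hy : IsAntiPeriod (fun p : ℝ × ℝ => C (p.1, -p.2)) (a - c, b) :=
      anti_swap (core2 a b c ha hab hbc htri (fun p => C (p.2, -p.1))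
        (mono_swap (mono_negy hmono))
        (fun hm => hseg (seg_negy hL (seg_swap hm))))
    exact anti_negy hy
  have P1 : IsPeriod C (2 * a, 0) := by
    have hp := period_of_anti_anti A1 (anti_neg A2)
    rwa [show ((a, c - b) + -(-a, c - b) : ℝ × ℝ) = (2 * a, 0) by
      simp only [Prod.neg_mk, Prod.mk_add_mk, Prod.mk.injEq]; constructor <;> ring] at hp
  have P2 : IsPeriod C (2 * b, 0) := by
    have hp := period_of_anti_anti A5 (anti_neg A6)
    rwa [show ((b, a - c) + -(-b, a - c) : ℝ × ℝ) = (2 * b, 0) by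
      simp only [Prod.neg_mk, Prod.mk_add_mk, Prod.mk.injEq]; constructor <;> ring] at hp
  have P3 : IsPeriod C (2 * c, 0) := by
    have hp := period_add P2 (period_of_anti_anti A3 A4)
    rwa [show ((2 * b, 0) + ((c - b, a) + (c - b, -a)) : ℝ × ℝ) = (2 * c, 0) by
      simp only [Prod.mk_add_mk, Prod.mk.injEq]; constructor <;> ring] at hp
  have P4 : IsPeriod C (0, 2 * a) := by
    have hp := period_of_anti_anti A3 (anti_neg A4)
    rwa [show ((c - b, a) + -(c - b, -a) : ℝ × ℝ) = (0, 2 * a) by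
      simp only [Prod.neg_mk, Prod.mk_add_mk, Prod.mk.injEq]; constructor <;> ring] at hp
  have P5 : IsPeriod C (0, 2 * b) := by
    have hp := period_of_anti_anti A7 (anti_neg A8)
    rwa [show ((a - c, b) + -(a - c, -b) : ℝ × ℝ) = (0, 2 * b) by
      simp only [Prod.neg_mk, Prod.mk_add_mk, Prod.mk.injEq]; constructor <;> ring] at hp
  have P6 : IsPeriod C (0, 2 * c) := by
    have hp := period_add P5 (period_of_anti_anti A1 A2)
    rwa [show ((0, 2 * b) + ((a, c - b) + (-a, c - b)) : ℝ × ℝ) = (0, 2 * c) by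
      simp only [Prod.mk_add_mk, Prod.mk.injEq]; constructor <;> ring] at hp
  exact ⟨⟨A1, A2, A3, A4, A5, A6, A7, A8⟩, P1, P2, P3, P4, P5, P6⟩
end

section
/- Let a < b = c be positive reals with c < a + b (so T(a,b,b) is a non-degenerate isosceles triangle), and let C : ℝ² → Bool be a two-coloring with no monochromatic copy of T(a,b,b). If the horizontal segment {(x,0) : 0 ≤ x ≤ a} is monochromatic, then the entire horizontal line y = 0 is monochromatic. -/
lemma bool_trick {x y z : Bool} (h1 : x ≠ y) (h2 : y ≠ z) : x = z := by
  cases x <;> cases y <;> cases z <;> simp_all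

theorem stmt10 (a b : ℝ) (ha : 0 < a) (hab : a < b) (htri : b < a + b)
    (C : ℝ × ℝ → Bool) (hmono : NoMonoCopy a b b C)
    (hseg : ∀ x ∈ Set.Icc (0:ℝ) a, C (x, 0) = C (0, 0)) :
    ∀ x : ℝ, C (x, 0) = C (0, 0) := by
  have hb : 0 < b := ha.trans hab
  have hd : 0 < b - a := by linarith
  -- key geometric lemma: a horizontal pair at distance a plus a point at
  -- vertical offset ±b within horizontal distance b of both forms a copy
  have key : ∀ x y u e : ℝ, |e| = b → |u - x| ≤ b → |u - (x + a)| ≤ b →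
      C (x, y) = C (x + a, y) → C (u, y + e) ≠ C (x, y) := by
    intro x y u e he h1 h2 hcc hmc
    refine hmono (x, y) (x + a, y) (u, y + e) ?_ ⟨hcc, hcc.symm.trans hmc.symm⟩
    have d1 : distInf (x, y) (x + a, y) = a := by
      simp only [distInf]
      have h : x - (x + a) = -a := by ring
      rw [h, abs_neg, abs_of_pos ha, sub_self, abs_zero, max_eq_left ha.le]
    have d2 : distInf (x + a, y) (u, y + e) = b := by
      simp only [distInf]
      have h : y - (y + e) = -e := by ring
      rw [h, abs_neg, he, abs_sub_comm]
      exact max_eq_right h2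
    have d3 : distInf (u, y + e) (x, y) = b := by
      simp only [distInf]
      have h : y + e - y = e := by ring
      rw [h, he]
      exact max_eq_right h1
    rw [IsCopy, d1, d2, d3]
  have main : ∀ n : ℕ, ∀ u : ℝ, -(2 * n * (b - a)) ≤ u → u ≤ a + 2 * n * (b - a) →
      C (u, 0) = C (0, 0) := by
    intro n
    induction n with
    | zero =>
      intro u h1 h2
      push_cast at h1 h2
      exact hseg u ⟨by linarith, by linarith⟩
    | succ n ih =>
      have hM : (0:ℝ) ≤ 2 * n * (b - a) := by positivity
      set M : ℝ := 2 * n * (b - a) with hMdef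
      -- points on the line y = b above the monochromatic segment have the other color
      have lineb : ∀ u : ℝ, -M - (b - a) ≤ u → u ≤ M + b → C (u, b) ≠ C (0, 0) := by
        intro u h1 h2
        set x : ℝ := max (-M) (u - b) with hxdef
        have hx1 : -M ≤ x := le_max_left _ _
        have hx2 : x ≤ M := max_le (by linarith) (by linarith)
        have hx3 : u - b ≤ x := le_max_right _ _
        have hx4 : x ≤ u + (b - a) := max_le (by linarith) (by linarith)
        have hux : |u - x| ≤ b := abs_le.2 ⟨by linarith, by linarith⟩
        have hux2 : |u - (x + a)| ≤ b := abs_le.2 ⟨by linarith, by linarith⟩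
        have hx0 : C (x, 0) = C (0, 0) := ih x (by linarith) (by linarith)
        have hcx : C (x, 0) = C (x + a, 0) :=
          hx0.trans (ih (x + a) (by linarith) (by linarith)).symm
        have hk := key x 0 u b (abs_of_pos hb) hux hux2 hcx
        rw [zero_add, hx0] at hk
        exact hk
      intro u h1 h2
      have hcast : (2 : ℝ) * (n + 1 : ℕ) * (b - a) = M + 2 * (b - a) := by
        push_cast; ring
      rw [hcast] at h1 h2
      set s : ℝ := max (-M - (b - a)) (u - b) with hsdef
      have hs1 : -M - (b - a) ≤ s := le_max_left _ _
      have hs2 : s ≤ M + (b - a) := max_le (by linarith) (by linarith)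
      have hs3 : u - b ≤ s := le_max_right _ _
      have hs4 : s ≤ u + (b - a) := max_le (by linarith) (by linarith)
      have hus : |u - s| ≤ b := abs_le.2 ⟨by linarith, by linarith⟩
      have hus2 : |u - (s + a)| ≤ b := abs_le.2 ⟨by linarith, by linarith⟩
      have hsb : C (s, b) ≠ C (0, 0) := lineb s hs1 (by linarith)
      have hsab : C (s + a, b) ≠ C (0, 0) := lineb (s + a) (by linarith) (by linarith)
      have hcs : C (s, b) = C (s + a, b) := bool_trick hsb (Ne.symm hsab)
      have he : |(-b : ℝ)| = b := by rw [abs_neg, abs_of_pos hb]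
      have hk := key s b u (-b) he hus hus2 hcs
      have hbb : b + -b = (0:ℝ) := by ring
      rw [hbb] at hk
      exact bool_trick hk hsb
  intro x
  obtain ⟨n, hn⟩ := exists_nat_ge (|x| / (2 * (b - a)))
  have h2d : (0:ℝ) < 2 * (b - a) := by linarith
  have hxn : |x| ≤ 2 * n * (b - a) := by
    rw [div_le_iff₀ h2d] at hn
    calc |x| ≤ n * (2 * (b - a)) := hn
      _ = 2 * n * (b - a) := by ring
  have hax := abs_le.1 (le_refl |x|)
  exact main n x (by cases abs_le.1 (le_refl |x|); linarith [neg_abs_le x, le_abs_self x])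
    (by linarith [le_abs_self x])
end

section
/- Let a ≤ b ≤ c be positive reals with a < b and c < a + b, and let C : ℝ² → Bool be a two-coloring of the plane with no monochromatic copy of T(a,b,c). If there exists a monochromatic axis-parallel segment of length c+a−b, then there exists a monochromatic axis-parallel line (a full horizontal or vertical line on which C is constant). -/
lemma isCopyABC (a b c : ℝ) (z₁ z₂ z₃ : ℝ × ℝ) (h₁ : distInf z₁ z₂ = a)
    (h₂ : distInf z₂ z₃ = b) (h₃ : distInf z₃ z₁ = c) : IsCopy a b c z₁ z₂ z₃ := by
  unfold IsCopy; rw [h₁, h₂, h₃]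
lemma distInf_eq_of (u y α₁ β₁ α₂ β₂ K : ℝ)
    (h : max |α₁ - α₂| |β₁ - β₂| = K) :
    distInf (u + α₁, y + β₁) (u + α₂, y + β₂) = K := by
  show max |u + α₁ - (u + α₂)| |y + β₁ - (y + β₂)| = K
  rw [show u + α₁ - (u + α₂) = α₁ - α₂ by ring, show y + β₁ - (y + β₂) = β₁ - β₂ by ring]
  exact h
lemma max_abs₁ {X Y K : ℝ} (h1 : X = K ∨ X = -K) (h2 : -K ≤ Y) (h3 : Y ≤ K) :
    max |X| |Y| = K := by
  have hK : 0 ≤ K := by linarith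
  have hx : |X| = K := by
    rcases h1 with h | h
    · rw [h]; exact abs_of_nonneg hK
    · rw [h, abs_neg]; exact abs_of_nonneg hK
  rw [hx]; exact max_eq_left (abs_le.mpr ⟨h2, h3⟩)
lemma max_abs₂ {X Y K : ℝ} (h1 : Y = K ∨ Y = -K) (h2 : -K ≤ X) (h3 : X ≤ K) :
    max |X| |Y| = K := by
  have hK : 0 ≤ K := by linarith
  have hy : |Y| = K := by
    rcases h1 with h | h
    · rw [h]; exact abs_of_nonneg hK
    · rw [h, abs_neg]; exact abs_of_nonneg hK
  rw [hy]; exact max_eq_right (abs_le.mpr ⟨h2, h3⟩)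
lemma force_a {a b c : ℝ} {C : ℝ × ℝ → Bool} (hm : NoMonoCopy a b c C)
    {z₁ z₂ z₃ : ℝ × ℝ} (hc : IsCopy a b c z₁ z₂ z₃) (e : Bool)
    (h₁ : C z₁ = e) (h₂ : C z₂ = e) : C z₃ = !e := by
  have h := hm z₁ z₂ z₃ hc
  rw [h₁, h₂] at h
  cases e <;> cases hv : C z₃ <;> simp_all
lemma force_b {a b c : ℝ} {C : ℝ × ℝ → Bool} (hm : NoMonoCopy a b c C)
    {z₁ z₂ z₃ : ℝ × ℝ} (hc : IsCopy a b c z₁ z₂ z₃) (e : Bool)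
    (h₂ : C z₂ = e) (h₃ : C z₃ = e) : C z₁ = !e := by
  have h := hm z₁ z₂ z₃ hc
  rw [h₂, h₃] at h
  cases e <;> cases hv : C z₁ <;> simp_all
lemma force_c {a b c : ℝ} {C : ℝ × ℝ → Bool} (hm : NoMonoCopy a b c C)
    {z₁ z₂ z₃ : ℝ × ℝ} (hc : IsCopy a b c z₁ z₂ z₃) (e : Bool)
    (h₃ : C z₃ = e) (h₁ : C z₁ = e) : C z₂ = !e := by
  have h := hm z₁ z₂ z₃ hc
  rw [h₁, h₃] at h
  cases e <;> cases hv : C z₂ <;> simp_all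
lemma bool_ne_eq_not {x y : Bool} (h : ¬ x = y) : x = !y := by
  cases x <;> cases y <;> simp_all

lemma ext_right (a b c : ℝ) (ha : 0 < a) (hab : a < b) (hbc : b ≤ c) (htri : c < a + b)
    (C : ℝ × ℝ → Bool) (hm : NoMonoCopy a b c C) (u y δ : ℝ)
    (hδ0 : 0 < δ) (hδ1 : δ ≤ a + b - c) (hδ2 : δ ≤ b + c - 2*a)
    (hseg : ∀ t ∈ Set.Icc (0:ℝ) (c + a - b), C (u + t, y) = C (u, y)) :
    C (u + (c + a - b + δ), y) = C (u, y) := by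
  by_contra hX0
  have hδa : δ ≤ a := by linarith
  -- seeds
  have s0 : C (u + 0, y + 0) = C (u, y) := by rw [add_zero, add_zero]
  have sa : C (u + a, y + 0) = C (u, y) := by
    rw [add_zero]; exact hseg a (Set.mem_Icc.mpr ⟨by linarith, by linarith⟩)
  have sL : C (u + (c + a - b), y + 0) = C (u, y) := by
    rw [add_zero]; exact hseg (c + a - b) (Set.mem_Icc.mpr ⟨by linarith, le_refl _⟩)
  have hX : C (u + (c + a - b + δ), y + 0) = !(C (u, y)) := by
    rw [add_zero]; exact bool_ne_eq_not hX0
  -- copy 1 : (0,0) (a,0) (c,b)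
  have copy1 : IsCopy a b c (u + 0, y + 0) (u + a, y + 0) (u + c, y + b) :=
    isCopyABC a b c _ _ _
      (distInf_eq_of _ _ _ _ _ _ _ (max_abs₁ (Or.inr (by ring)) (by linarith) (by linarith)))
      (distInf_eq_of _ _ _ _ _ _ _ (max_abs₂ (Or.inr (by ring)) (by linarith) (by linarith)))
      (distInf_eq_of _ _ _ _ _ _ _ (max_abs₁ (Or.inl (by ring)) (by linarith) (by linarith)))
  have hJ : C (u + c, y + b) = !(C (u, y)) := force_a hm copy1 _ s0 sa
  -- copy 2 : (0,0) (a,0) (c,-b)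
  have copy2 : IsCopy a b c (u + 0, y + 0) (u + a, y + 0) (u + c, y + -b) :=
    isCopyABC a b c _ _ _
      (distInf_eq_of _ _ _ _ _ _ _ (max_abs₁ (Or.inr (by ring)) (by linarith) (by linarith)))
      (distInf_eq_of _ _ _ _ _ _ _ (max_abs₂ (Or.inl (by ring)) (by linarith) (by linarith)))
      (distInf_eq_of _ _ _ _ _ _ _ (max_abs₁ (Or.inl (by ring)) (by linarith) (by linarith)))
  have hJ' : C (u + c, y + -b) = !(C (u, y)) := force_a hm copy2 _ s0 sa
  -- copy 3 : (W, J, X) = ((a+c,c),(c,b),(L+δ,0))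
  have copy3 : IsCopy a b c (u + (a + c), y + c) (u + c, y + b) (u + (c + a - b + δ), y + 0) :=
    isCopyABC a b c _ _ _
      (distInf_eq_of _ _ _ _ _ _ _ (max_abs₁ (Or.inl (by ring)) (by linarith) (by linarith)))
      (distInf_eq_of _ _ _ _ _ _ _ (max_abs₂ (Or.inl (by ring)) (by linarith) (by linarith)))
      (distInf_eq_of _ _ _ _ _ _ _ (max_abs₂ (Or.inr (by ring)) (by linarith) (by linarith)))
  have hW : C (u + (a + c), y + c) = C (u, y) := by
    have := force_b hm copy3 _ hJ hX
    rwa [Bool.not_not] at this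
  -- copy 4 : (W', J, X) = ((c-a,c),(c,b),X)
  have copy4 : IsCopy a b c (u + (c - a), y + c) (u + c, y + b) (u + (c + a - b + δ), y + 0) :=
    isCopyABC a b c _ _ _
      (distInf_eq_of _ _ _ _ _ _ _ (max_abs₁ (Or.inr (by ring)) (by linarith) (by linarith)))
      (distInf_eq_of _ _ _ _ _ _ _ (max_abs₂ (Or.inl (by ring)) (by linarith) (by linarith)))
      (distInf_eq_of _ _ _ _ _ _ _ (max_abs₂ (Or.inr (by ring)) (by linarith) (by linarith)))
  have hW' : C (u + (c - a), y + c) = C (u, y) := by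
    have := force_b hm copy4 _ hJ hX
    rwa [Bool.not_not] at this
  -- copy 5 : (V, X, J') = ((c-b+δ, c-b), X, (c,-b))
  have copy5 : IsCopy a b c (u + (c - b + δ), y + (c - b)) (u + (c + a - b + δ), y + 0) (u + c, y + -b) :=
    isCopyABC a b c _ _ _
      (distInf_eq_of _ _ _ _ _ _ _ (max_abs₁ (Or.inr (by ring)) (by linarith) (by linarith)))
      (distInf_eq_of _ _ _ _ _ _ _ (max_abs₂ (Or.inl (by ring)) (by linarith) (by linarith)))
      (distInf_eq_of _ _ _ _ _ _ _ (max_abs₂ (Or.inr (by ring)) (by linarith) (by linarith)))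
  have hV : C (u + (c - b + δ), y + (c - b)) = C (u, y) := by
    have := force_b hm copy5 _ hX hJ'
    rwa [Bool.not_not] at this
  -- copy 6 : (Oa, T1, W) = ((a,0),(c+a-b,a),(a+c,c))
  have copy6 : IsCopy a b c (u + a, y + 0) (u + (c + a - b), y + a) (u + (a + c), y + c) :=
    isCopyABC a b c _ _ _
      (distInf_eq_of _ _ _ _ _ _ _ (max_abs₂ (Or.inr (by ring)) (by linarith) (by linarith)))
      (distInf_eq_of _ _ _ _ _ _ _ (max_abs₁ (Or.inr (by ring)) (by linarith) (by linarith)))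
      (distInf_eq_of _ _ _ _ _ _ _ (max_abs₁ (Or.inl (by ring)) (by linarith) (by linarith)))
  have hT1 : C (u + (c + a - b), y + a) = !(C (u, y)) := force_c hm copy6 _ hW sa
  -- copy 7 : (OL, U, W') = ((c+a-b,0),(c-b,c-b),(c-a,c))
  have copy7 : IsCopy a b c (u + (c + a - b), y + 0) (u + (c - b), y + (c - b)) (u + (c - a), y + c) :=
    isCopyABC a b c _ _ _
      (distInf_eq_of _ _ _ _ _ _ _ (max_abs₁ (Or.inl (by ring)) (by linarith) (by linarith)))
      (distInf_eq_of _ _ _ _ _ _ _ (max_abs₂ (Or.inr (by ring)) (by linarith) (by linarith)))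
      (distInf_eq_of _ _ _ _ _ _ _ (max_abs₂ (Or.inl (by ring)) (by linarith) (by linarith)))
  have hU : C (u + (c - b), y + (c - b)) = !(C (u, y)) := force_c hm copy7 _ hW' sL
  -- copy 8 : (W, T2, OL) = ((a+c,c),(a+c,c-a),(c+a-b,0))
  have copy8 : IsCopy a b c (u + (a + c), y + c) (u + (a + c), y + (c - a)) (u + (c + a - b), y + 0) :=
    isCopyABC a b c _ _ _
      (distInf_eq_of _ _ _ _ _ _ _ (max_abs₂ (Or.inl (by ring)) (by linarith) (by linarith)))
      (distInf_eq_of _ _ _ _ _ _ _ (max_abs₁ (Or.inl (by ring)) (by linarith) (by linarith)))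
      (distInf_eq_of _ _ _ _ _ _ _ (max_abs₂ (Or.inr (by ring)) (by linarith) (by linarith)))
  have hT2 : C (u + (a + c), y + (c - a)) = !(C (u, y)) := force_c hm copy8 _ sL hW
  -- copy 9 : (O0, T3, W') = ((0,0),(a,c-b),(c-a,c))
  have copy9 : IsCopy a b c (u + 0, y + 0) (u + a, y + (c - b)) (u + (c - a), y + c) :=
    isCopyABC a b c _ _ _
      (distInf_eq_of _ _ _ _ _ _ _ (max_abs₁ (Or.inr (by ring)) (by linarith) (by linarith)))
      (distInf_eq_of _ _ _ _ _ _ _ (max_abs₂ (Or.inr (by ring)) (by linarith) (by linarith)))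
      (distInf_eq_of _ _ _ _ _ _ _ (max_abs₂ (Or.inl (by ring)) (by linarith) (by linarith)))
  have hT3 : C (u + a, y + (c - b)) = !(C (u, y)) := force_c hm copy9 _ hW' s0
  -- copy 10 : (T1, U, P) = ((c+a-b,a),(c-b,c-b),(a-b,c))
  have copy10 : IsCopy a b c (u + (c + a - b), y + a) (u + (c - b), y + (c - b)) (u + (a - b), y + c) :=
    isCopyABC a b c _ _ _
      (distInf_eq_of _ _ _ _ _ _ _ (max_abs₁ (Or.inl (by ring)) (by linarith) (by linarith)))
      (distInf_eq_of _ _ _ _ _ _ _ (max_abs₂ (Or.inr (by ring)) (by linarith) (by linarith)))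
      (distInf_eq_of _ _ _ _ _ _ _ (max_abs₁ (Or.inr (by ring)) (by linarith) (by linarith)))
  have hP : C (u + (a - b), y + c) = C (u, y) := by
    have := force_a hm copy10 _ hT1 hU
    rwa [Bool.not_not] at this
  -- copy 11 : (T3, Z, T2) = ((a,c-b),(c+a-b,c+a-b),(a+c,c-a))
  have copy11 : IsCopy a b c (u + a, y + (c - b)) (u + (c + a - b), y + (c + a - b)) (u + (a + c), y + (c - a)) :=
    isCopyABC a b c _ _ _
      (distInf_eq_of _ _ _ _ _ _ _ (max_abs₂ (Or.inr (by ring)) (by linarith) (by linarith)))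
      (distInf_eq_of _ _ _ _ _ _ _ (max_abs₁ (Or.inr (by ring)) (by linarith) (by linarith)))
      (distInf_eq_of _ _ _ _ _ _ _ (max_abs₁ (Or.inl (by ring)) (by linarith) (by linarith)))
  have hZa : C (u + (c + a - b), y + (c + a - b)) = C (u, y) := by
    have := force_c hm copy11 _ hT2 hT3
    rwa [Bool.not_not] at this
  -- copy 12 : (Z, V, P) = ((c+a-b,c+a-b),(c-b+δ,c-b),(a-b,c))
  have copy12 : IsCopy a b c (u + (c + a - b), y + (c + a - b)) (u + (c - b + δ), y + (c - b)) (u + (a - b), y + c) :=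
    isCopyABC a b c _ _ _
      (distInf_eq_of _ _ _ _ _ _ _ (max_abs₂ (Or.inl (by ring)) (by linarith) (by linarith)))
      (distInf_eq_of _ _ _ _ _ _ _ (max_abs₂ (Or.inr (by ring)) (by linarith) (by linarith)))
      (distInf_eq_of _ _ _ _ _ _ _ (max_abs₁ (Or.inr (by ring)) (by linarith) (by linarith)))
  have hZb : C (u + (c + a - b), y + (c + a - b)) = !(C (u, y)) := force_b hm copy12 _ hV hP
  rw [hZa] at hZb
  cases hb : C (u, y) <;> rw [hb] at hZb <;> exact absurd hZb (by decide)

def flipx (C : ℝ × ℝ → Bool) : ℝ × ℝ → Bool := fun p => C (-p.1, p.2)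

lemma nomono_flipx {a b c : ℝ} {C : ℝ × ℝ → Bool} (h : NoMonoCopy a b c C) :
    NoMonoCopy a b c (flipx C) := by
  intro z₁ z₂ z₃ hc
  have hc' : IsCopy a b c (-z₁.1, z₁.2) (-z₂.1, z₂.2) (-z₃.1, z₃.2) := by
    unfold IsCopy at hc ⊢
    rw [distInf_negx, distInf_negx, distInf_negx]; exact hc
  exact h _ _ _ hc'

lemma ext_left (a b c : ℝ) (ha : 0 < a) (hab : a < b) (hbc : b ≤ c) (htri : c < a + b)
    (C : ℝ × ℝ → Bool) (hm : NoMonoCopy a b c C) (u y δ : ℝ)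
    (hδ0 : 0 < δ) (hδ1 : δ ≤ a + b - c) (hδ2 : δ ≤ b + c - 2*a)
    (hseg : ∀ t ∈ Set.Icc (0:ℝ) (c + a - b), C (u + t, y) = C (u, y)) :
    C (u - δ, y) = C (u, y) := by
  have hmD : NoMonoCopy a b c (flipx C) := nomono_flipx hm
  have hbaseL : C (u + (c + a - b), y) = C (u, y) :=
    hseg (c + a - b) (Set.mem_Icc.mpr ⟨by linarith, le_refl _⟩)
  have hsegD : ∀ t ∈ Set.Icc (0:ℝ) (c + a - b),
      flipx C (-(u + (c + a - b)) + t, y) = flipx C (-(u + (c + a - b)), y) := by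
    intro t ht
    rcases Set.mem_Icc.mp ht with ⟨ht1, ht2⟩
    have e1 : flipx C (-(u + (c + a - b)) + t, y) = C (u + (c + a - b - t), y) := by
      rw [show flipx C (-(u + (c + a - b)) + t, y) = C (-(-(u + (c + a - b)) + t), y) from rfl,
        show -(-(u + (c + a - b)) + t) = u + (c + a - b - t) by ring]
    have e2 : flipx C (-(u + (c + a - b)), y) = C (u + (c + a - b), y) := by
      rw [show flipx C (-(u + (c + a - b)), y) = C (-(-(u + (c + a - b))), y) from rfl, neg_neg]
    rw [e1, e2, hbaseL, hseg (c + a - b - t) (Set.mem_Icc.mpr ⟨by linarith, by linarith⟩)]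
  have key := ext_right a b c ha hab hbc htri (flipx C) hmD (-(u + (c + a - b))) y δ hδ0 hδ1 hδ2 hsegD
  have e3 : flipx C (-(u + (c + a - b)) + (c + a - b + δ), y) = C (u - δ, y) := by
    rw [show flipx C (-(u + (c + a - b)) + (c + a - b + δ), y)
        = C (-(-(u + (c + a - b)) + (c + a - b + δ)), y) from rfl,
      show -(-(u + (c + a - b)) + (c + a - b + δ)) = u - δ by ring]
  have e2 : flipx C (-(u + (c + a - b)), y) = C (u + (c + a - b), y) := by
    rw [show flipx C (-(u + (c + a - b)), y) = C (-(-(u + (c + a - b))), y) from rfl, neg_neg]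
  rw [e3, e2, hbaseL] at key
  exact key

lemma mono_line (a b c : ℝ) (ha : 0 < a) (hab : a < b) (hbc : b ≤ c) (htri : c < a + b)
    (C : ℝ × ℝ → Bool) (hm : NoMonoCopy a b c C) (u y : ℝ)
    (hseg : ∀ t ∈ Set.Icc (0:ℝ) (c + a - b), C (u + t, y) = C (u, y)) :
    ∀ x : ℝ, C (x, y) = C (u, y) := by
  have hδ₀1 : (0:ℝ) < a + b - c := by linarith
  have hδ₀2 : (0:ℝ) < b + c - 2*a := by linarith
  set δ₀ := min (a + b - c) (b + c - 2*a) with hδ₀def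
  have hδ₀ : 0 < δ₀ := lt_min hδ₀1 hδ₀2
  have hδ₀l : δ₀ ≤ a + b - c := min_le_left _ _
  have hδ₀r : δ₀ ≤ b + c - 2*a := min_le_right _ _
  have hL : (0:ℝ) ≤ c + a - b := by linarith
  have key : ∀ n : ℕ, ∀ x : ℝ, u - n * δ₀ ≤ x → x ≤ u + (c + a - b) + n * δ₀ →
      C (x, y) = C (u, y) := by
    intro n
    induction n with
    | zero =>
      intro x h1 h2
      push_cast at h1 h2
      have := hseg (x - u) (Set.mem_Icc.mpr ⟨by linarith, by linarith⟩)
      rwa [show u + (x - u) = x by ring] at this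
    | succ n ih =>
      intro x h1 h2
      push_cast at h1 h2
      have hn0 : (0:ℝ) ≤ (n:ℝ) * δ₀ := mul_nonneg (Nat.cast_nonneg n) hδ₀.le
      by_cases hx1 : x ≤ u + (c + a - b) + n * δ₀
      · by_cases hx2 : u - n * δ₀ ≤ x
        · exact ih x (by push_cast; linarith) (by push_cast; linarith)
        · push_neg at hx2
          have hbase : C (u - n * δ₀, y) = C (u, y) :=
            ih (u - n * δ₀) (by push_cast; linarith) (by push_cast; linarith)
          have hseg' : ∀ t ∈ Set.Icc (0:ℝ) (c + a - b),
              C (u - n * δ₀ + t, y) = C (u - n * δ₀, y) := by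
            intro t ht
            rcases Set.mem_Icc.mp ht with ⟨ht1, ht2⟩
            have := ih (u - n * δ₀ + t) (by push_cast; linarith) (by push_cast; linarith)
            rw [this, hbase]
          have hd0 : 0 < (u - n * δ₀) - x := by linarith
          have hd1 : (u - n * δ₀) - x ≤ δ₀ := by linarith
          have := ext_left a b c ha hab hbc htri C hm (u - n * δ₀) y ((u - n * δ₀) - x)
            hd0 (by linarith) (by linarith) hseg'
          rwa [show u - n * δ₀ - (u - n * δ₀ - x) = x by ring, hbase] at this
      · push_neg at hx1
        have hbase : C (u + n * δ₀, y) = C (u, y) :=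
          ih (u + n * δ₀) (by push_cast; linarith) (by push_cast; linarith)
        have hseg' : ∀ t ∈ Set.Icc (0:ℝ) (c + a - b),
            C (u + n * δ₀ + t, y) = C (u + n * δ₀, y) := by
          intro t ht
          rcases Set.mem_Icc.mp ht with ⟨ht1, ht2⟩
          have := ih (u + n * δ₀ + t) (by push_cast; linarith) (by push_cast; linarith)
          rw [this, hbase]
        have hd0 : 0 < x - (u + (c + a - b) + n * δ₀) := by linarith
        have hd1 : x - (u + (c + a - b) + n * δ₀) ≤ δ₀ := by linarith
        have := ext_right a b c ha hab hbc htri C hm (u + n * δ₀) y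
          (x - (u + (c + a - b) + n * δ₀)) hd0 (by linarith) (by linarith) hseg'
        rwa [show u + n * δ₀ + (c + a - b + (x - (u + (c + a - b) + n * δ₀))) = x by ring,
          hbase] at this
  intro x
  obtain ⟨n, hn⟩ := exists_nat_ge (|x - u| / δ₀)
  have hxu : |x - u| ≤ n * δ₀ := by
    rw [div_le_iff₀ hδ₀] at hn
    linarith
  rcases abs_le.mp hxu with ⟨hl, hr⟩
  exact key n x (by linarith) (by linarith)

def swapc (C : ℝ × ℝ → Bool) : ℝ × ℝ → Bool := fun p => C (p.2, p.1)

lemma nomono_swap {a b c : ℝ} {C : ℝ × ℝ → Bool} (h : NoMonoCopy a b c C) :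
    NoMonoCopy a b c (swapc C) := by
  intro z₁ z₂ z₃ hc
  have hc' : IsCopy a b c (z₁.2, z₁.1) (z₂.2, z₂.1) (z₃.2, z₃.1) := by
    unfold IsCopy at hc ⊢
    rw [distInf_swap, distInf_swap, distInf_swap]; exact hc
  exact h _ _ _ hc'

theorem stmt11 (a b c : ℝ) (ha : 0 < a) (hab : a < b) (hbc : b ≤ c) (htri : c < a + b)
    (C : ℝ × ℝ → Bool) (hmono : NoMonoCopy a b c C)
    (hseg : MonoSeg C (c + a - b)) :
    (∃ y₀ : ℝ, ∀ x : ℝ, C (x, y₀) = C (0, y₀)) ∨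
    (∃ x₀ : ℝ, ∀ y : ℝ, C (x₀, y) = C (x₀, 0)) := by
  rcases hseg with ⟨x₀, y₀, hH | hV⟩
  · left
    have hline := mono_line a b c ha hab hbc htri C hmono x₀ y₀ hH
    exact ⟨y₀, fun x => (hline x).trans (hline 0).symm⟩
  · right
    have hmS : NoMonoCopy a b c (swapc C) := nomono_swap hmono
    have hsegD : ∀ t ∈ Set.Icc (0:ℝ) (c + a - b),
        swapc C (y₀ + t, x₀) = swapc C (y₀, x₀) := fun t ht => hV t ht
    have hline := mono_line a b c ha hab hbc htri (swapc C) hmS y₀ x₀ hsegD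
    refine ⟨x₀, fun yy => ?_⟩
    have h1 : swapc C (yy, x₀) = swapc C (y₀, x₀) := hline yy
    have h2 : swapc C (0, x₀) = swapc C (y₀, x₀) := hline 0
    exact (h1.trans h2.symm :)
end

section
/- Let a ≤ b ≤ c be positive reals with c < a + b, and let C : ℝ² → Bool be a two-coloring with no monochromatic copy of T(a,b,c). If the horizontal line y = 0 is entirely red (C constant equal to red on it), then both horizontal lines y = a and y = b are entirely blue. -/
theorem stmt13 (a b c : ℝ) (ha : 0 < a) (hab : a ≤ b) (hbc : b ≤ c) (htri : c < a + b)
    (C : ℝ × ℝ → Bool) (hmono : NoMonoCopy a b c C) (red : Bool)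
    (hline : ∀ x : ℝ, C (x, 0) = red) :
    (∀ x : ℝ, C (x, a) = !red) ∧ (∀ x : ℝ, C (x, b) = !red) := by
  have hca : a ≤ c := le_trans hab hbc
  constructor
  · intro x
    by_contra h
    have hx : C (x, a) = red := by
      cases hr : C (x, a) <;> cases red <;> simp_all
    refine hmono (x, a) (x - (c - b), 0) (x + b, 0) ?_ ⟨?_, ?_⟩
    · unfold IsCopy distInf
      simp only
      have h1 : |x - (x - (c - b))| = c - b := by
        rw [abs_of_nonneg] <;> [ring_nf; linarith]
      have h2 : |a - 0| = a := by rw [abs_of_nonneg] <;> linarith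
      have h3 : |x - (c - b) - (x + b)| = c := by
        rw [abs_sub_comm, abs_of_nonneg] <;> [ring_nf; linarith]
      have h4 : |(0:ℝ) - 0| = 0 := by simp
      have h5 : |x + b - x| = b := by rw [abs_of_nonneg] <;> [ring_nf; linarith]
      have h6 : |0 - a| = a := by rw [abs_sub_comm, abs_of_nonneg] <;> linarith
      rw [h1, h2, h3, h4, h5, h6, max_eq_right (by linarith), max_eq_left (by linarith),
        max_eq_left (by linarith)]
      rw [show ({a, c, b} : Multiset ℝ) = {a, b, c} from congrArg _ (Multiset.cons_swap c b 0)]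
    · rw [hx, hline]
    · rw [hline, hline]
  · intro x
    by_contra h
    have hx : C (x, b) = red := by
      cases hr : C (x, b) <;> cases red <;> simp_all
    refine hmono (x, b) (x + (c - a), 0) (x + c, 0) ?_ ⟨?_, ?_⟩
    · unfold IsCopy distInf
      simp only
      have h1 : |x - (x + (c - a))| = c - a := by
        rw [abs_sub_comm, abs_of_nonneg] <;> [ring_nf; linarith]
      have h2 : |b - 0| = b := by rw [abs_of_nonneg] <;> linarith
      have h3 : |x + (c - a) - (x + c)| = a := by
        rw [abs_sub_comm, abs_of_nonneg] <;> [ring_nf; linarith]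
      have h4 : |(0:ℝ) - 0| = 0 := by simp
      have h5 : |x + c - x| = c := by rw [abs_of_nonneg] <;> [ring_nf; linarith]
      have h6 : |0 - b| = b := by rw [abs_sub_comm, abs_of_nonneg] <;> linarith
      rw [h1, h2, h3, h4, h5, h6, max_eq_right (by linarith), max_eq_left (by linarith),
        max_eq_left (by linarith)]
      rw [show ({b, a, c} : Multiset ℝ) = {a, b, c} by
        simp [Multiset.cons_swap]]
    · rw [hx, hline]
    · rw [hline, hline]
end

section
/- Let a ≤ b ≤ c be positive reals with c < a + b, and let C : ℝ² → Bool be a two-coloring with no monochromatic copy of T(a,b,c) such that the horizontal line y = 0 is entirely red. Suppose there exist integers n, m with n + m even and c − b ≤ an + bm ≤ a. Then the horizontal line y = c is entirely blue. -/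
/-!
A monochromatic horizontal line of colour `κ` forces the lines at vertical distance `a` and `b`
to have colour `!κ`: each point there is the apex of a copy of `T(a,b,c)` whose two other
vertices lie on the given line. By induction, the line `y = a n + b m` has the colour of `y = 0`
exactly when `n + m` is even. When `c - b ≤ a n + b m ≤ a`, every point of `y = c` forms a copy
of `T(a,b,c)` with a point of `y = 0` and a point of `y = a n + b m`, so `y = c` has the other
colour.
-/

def IsMonoHorizLine (C : ℝ × ℝ → Bool) (h : ℝ) (κ : Bool) : Prop := ∀ x : ℝ, C (x, h) = κ

lemma distInf_eq_of_abs_fst {x y x' y' d : ℝ} (hx : |x - x'| = d) (hy : |y - y'| ≤ d) :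
    distInf (x, y) (x', y') = d := by
  change max |x - x'| |y - y'| = d
  rw [hx, max_eq_left hy]

lemma distInf_eq_of_abs_snd {x y x' y' d : ℝ} (hx : |x - x'| ≤ d) (hy : |y - y'| = d) :
    distInf (x, y) (x', y') = d := by
  change max |x - x'| |y - y'| = d
  rw [hy, max_eq_right hx]

lemma isCopy_of_distInf {a b c : ℝ} {z₁ z₂ z₃ : ℝ × ℝ} (h₁₂ : distInf z₁ z₂ = a)
    (h₂₃ : distInf z₂ z₃ = b) (h₃₁ : distInf z₃ z₁ = c) : IsCopy a b c z₁ z₂ z₃ := by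
  rw [IsCopy, h₁₂, h₂₃, h₃₁]

lemma Bool.ite_even_add_one (κ : Bool) (k : ℤ) :
    (if Even (k + 1) then κ else !κ) = !(if Even k then κ else !κ) := by
  by_cases hk : Even k <;> simp [hk]

lemma Bool.ite_even_sub_one (κ : Bool) (k : ℤ) :
    (if Even (k - 1) then κ else !κ) = !(if Even k then κ else !κ) := by
  by_cases hk : Even k <;> simp [hk]

lemma IsMonoHorizLine.add_mul_int {C : ℝ × ℝ → Bool} {h d : ℝ} {κ : Bool} (hd : 0 ≤ d)
    (hstep : ∀ h e κ, IsMonoHorizLine C h κ → |e| = d → IsMonoHorizLine C (h + e) (!κ))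
    (hline : IsMonoHorizLine C h κ) (k : ℤ) :
    IsMonoHorizLine C (h + d * k) (if Even k then κ else !κ) := by
  induction k using Int.induction_on with
  | zero => simpa using hline
  | succ k ih =>
    have hshift : h + d * ((k + 1 : ℤ) : ℝ) = h + d * (k : ℤ) + d := by push_cast; ring
    rw [hshift, Bool.ite_even_add_one]
    exact hstep _ _ _ ih (abs_of_nonneg hd)
  | pred k ih =>
    have hshift : h + d * ((-k - 1 : ℤ) : ℝ) = h + d * (-k : ℤ) + -d := by push_cast; ring
    rw [hshift, Bool.ite_even_sub_one]
    exact hstep _ _ _ ih (by rw [abs_neg, abs_of_nonneg hd])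

namespace NoMonoCopy

variable {a b c : ℝ} {C : ℝ × ℝ → Bool} {h e : ℝ} {κ : Bool}

lemma false_of_isCopy (hmono : NoMonoCopy a b c C) {z₁ z₂ z₃ : ℝ × ℝ}
    (hcopy : IsCopy a b c z₁ z₂ z₃) (h₁ : C z₁ = κ) (h₂ : C z₂ = κ) (h₃ : C z₃ = κ) : False :=
  hmono z₁ z₂ z₃ hcopy ⟨h₁.trans h₂.symm, h₂.trans h₃.symm⟩

lemma isMonoHorizLine_add_of_abs_eq_a (hmono : NoMonoCopy a b c C) (hab : a ≤ b) (hbc : b ≤ c)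
    (htri : c ≤ a + b) (hline : IsMonoHorizLine C h κ) (he : |e| = a) :
    IsMonoHorizLine C (h + e) (!κ) := by
  intro x
  have hb : 0 ≤ b := (abs_nonneg e).trans (he.trans_le hab)
  rw [Bool.eq_not]
  intro hx
  refine hmono.false_of_isCopy (z₁ := (x - (c - b), h)) (z₃ := (x + b, h))
    (isCopy_of_distInf ?_ ?_ ?_) (hline _) hx (hline _)
  · exact distInf_eq_of_abs_snd (abs_le.2 ⟨by linarith, by linarith⟩)
      (by rw [sub_add_cancel_left, abs_neg, he])
  · exact distInf_eq_of_abs_fst ((abs_eq hb).2 (.inr (by ring)))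
      (by rw [add_sub_cancel_left, he]; exact hab)
  · exact distInf_eq_of_abs_fst ((abs_eq (hb.trans hbc)).2 (.inl (by ring)))
      (by simp [hb.trans hbc])

lemma isMonoHorizLine_add_of_abs_eq_b (hmono : NoMonoCopy a b c C) (ha : 0 ≤ a) (hab : a ≤ b)
    (hbc : b ≤ c) (htri : c ≤ a + b) (hline : IsMonoHorizLine C h κ) (he : |e| = b) :
    IsMonoHorizLine C (h + e) (!κ) := by
  intro x
  have hc : 0 ≤ c := (ha.trans hab).trans hbc
  rw [Bool.eq_not]
  intro hx
  refine hmono.false_of_isCopy (z₁ := (x + c, h)) (z₂ := (x + (c - a), h))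
    (isCopy_of_distInf ?_ ?_ ?_) (hline _) (hline _) hx
  · exact distInf_eq_of_abs_fst ((abs_eq ha).2 (.inl (by ring))) (by simp [ha])
  · exact distInf_eq_of_abs_snd (abs_le.2 ⟨by linarith, by linarith⟩)
      (by rw [sub_add_cancel_left, abs_neg, he])
  · exact distInf_eq_of_abs_fst ((abs_eq hc).2 (.inr (by ring)))
      (by rw [add_sub_cancel_left, he]; exact hbc)

lemma isMonoHorizLine_add_mul_add_mul_of_even (hmono : NoMonoCopy a b c C) (ha : 0 ≤ a)
    (hab : a ≤ b) (hbc : b ≤ c) (htri : c ≤ a + b) (hline : IsMonoHorizLine C h κ) {n m : ℤ}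
    (heven : Even (n + m)) : IsMonoHorizLine C (h + (a * n + b * m)) κ := by
  have hm := hline.add_mul_int (ha.trans hab)
    (fun _ _ _ ↦ hmono.isMonoHorizLine_add_of_abs_eq_b ha hab hbc htri) m
  have hnm := hm.add_mul_int ha
    (fun _ _ _ ↦ hmono.isMonoHorizLine_add_of_abs_eq_a hab hbc htri) n
  rw [show h + b * m + a * n = h + (a * n + b * m) by ring] at hnm
  have hparity : Even n ↔ Even m := Int.even_add.1 heven
  by_cases hn : Even n
  · simpa [hn, hparity.1 hn] using hnm
  · simpa [hn, mt hparity.2 hn] using hnm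

lemma isMonoHorizLine_add_c (hmono : NoMonoCopy a b c C) (hab : a ≤ b) (hbc : b ≤ c) {s : ℝ}
    (hs₁ : c - b ≤ s) (hs₂ : s ≤ a) (hline : IsMonoHorizLine C h κ)
    (hline' : IsMonoHorizLine C (h + s) κ) : IsMonoHorizLine C (h + c) (!κ) := by
  intro x
  have ha : 0 ≤ a := by linarith
  have hc : 0 ≤ c := by linarith
  rw [Bool.eq_not]
  intro hx
  refine hmono.false_of_isCopy (z₁ := (x + b - a, h)) (z₂ := (x + b, h + s))
    (isCopy_of_distInf ?_ ?_ ?_) (hline _) (hline' _) hx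
  · exact distInf_eq_of_abs_fst ((abs_eq ha).2 (.inr (by ring)))
      (abs_le.2 ⟨by linarith, by linarith⟩)
  · exact distInf_eq_of_abs_fst ((abs_eq (by linarith)).2 (.inl (by ring)))
      (abs_le.2 ⟨by linarith, by linarith⟩)
  · exact distInf_eq_of_abs_snd (abs_le.2 ⟨by linarith, by linarith⟩)
      ((abs_eq hc).2 (.inl (by ring)))

end NoMonoCopy

theorem stmt14 (a b c : ℝ) (ha : 0 < a) (hab : a ≤ b) (hbc : b ≤ c) (htri : c < a + b)
    (C : ℝ × ℝ → Bool) (hmono : NoMonoCopy a b c C) (red : Bool)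
    (hline : ∀ x : ℝ, C (x, 0) = red)
    (n m : ℤ) (heven : Even (n + m)) (h₁ : c - b ≤ a * n + b * m) (h₂ : a * n + b * m ≤ a) :
    ∀ x : ℝ, C (x, c) = !red := by
  have h0 : IsMonoHorizLine C 0 red := hline
  have hnm := hmono.isMonoHorizLine_add_mul_add_mul_of_even ha.le hab hbc htri.le h0 heven
  have hc := hmono.isMonoHorizLine_add_c hab hbc h₁ h₂ h0 hnm
  rwa [zero_add] at hc
end

section
/- Let a ≤ b ≤ c be positive reals with c < a + b, and let C : ℝ² → Bool be a two-coloring with no monochromatic copy of T(a,b,c) such that the horizontal line y = 0 is entirely red. Then for all integers n, m ≥ 0, the horizontal line y = an + bm is red if n + m is even and blue if n + m is odd. -/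
lemma step_a (a b c : ℝ) (ha : 0 < a) (hab : a ≤ b) (hbc : b ≤ c) (htri : c < a + b)
    (C : ℝ × ℝ → Bool) (hmono : NoMonoCopy a b c C) (h : ℝ) (r : Bool)
    (hl : ∀ x, C (x, h) = r) : ∀ x, C (x, h + a) = !r := by
  intro x
  by_contra hx
  have hx' : C (x, h + a) = r := by
    cases hb : C (x, h + a) <;> cases r <;> simp_all
  have hcopy : IsCopy a b c (x - (c - b), h) (x + b, h) (x, h + a) := by
    unfold IsCopy distInf
    have e1 : max |(x - (c - b)) - (x + b)| |h - h| = c := by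
      rw [show (x - (c - b)) - (x + b) = -c by ring]
      rw [abs_neg, abs_of_pos (by linarith), sub_self, abs_zero]
      exact max_eq_left (by linarith)
    have e2 : max |(x + b) - x| |h - (h + a)| = b := by
      rw [show (x + b) - x = b by ring, show h - (h + a) = -a by ring]
      rw [abs_neg, abs_of_pos ha, abs_of_pos (by linarith)]
      exact max_eq_left hab
    have e3 : max |x - (x - (c - b))| |(h + a) - h| = a := by
      rw [show x - (x - (c - b)) = c - b by ring, show (h + a) - h = a by ring]
      rw [abs_of_nonneg (by linarith), abs_of_pos ha]
      exact max_eq_right (by linarith)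
    rw [e1, e2, e3]
    show (c ::ₘ b ::ₘ a ::ₘ 0) = (a ::ₘ b ::ₘ c ::ₘ 0)
    rw [Multiset.cons_swap c b, Multiset.cons_swap c a, Multiset.cons_swap b a]
  exact hmono _ _ _ hcopy ⟨by rw [hl, hl], by rw [hl, hx']⟩

lemma step_b (a b c : ℝ) (ha : 0 < a) (hab : a ≤ b) (hbc : b ≤ c) (htri : c < a + b)
    (C : ℝ × ℝ → Bool) (hmono : NoMonoCopy a b c C) (h : ℝ) (r : Bool)
    (hl : ∀ x, C (x, h) = r) : ∀ x, C (x, h + b) = !r := by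
  intro x
  by_contra hx
  have hx' : C (x, h + b) = r := by
    cases hb : C (x, h + b) <;> cases r <;> simp_all
  have hcopy : IsCopy a b c (x + (c - a), h) (x + c, h) (x, h + b) := by
    unfold IsCopy distInf
    have e1 : max |(x + (c - a)) - (x + c)| |h - h| = a := by
      rw [show (x + (c - a)) - (x + c) = -a by ring]
      rw [abs_neg, abs_of_pos ha, sub_self, abs_zero]
      exact max_eq_left (by linarith)
    have e2 : max |(x + c) - x| |h - (h + b)| = c := by
      rw [show (x + c) - x = c by ring, show h - (h + b) = -b by ring]
      rw [abs_neg, abs_of_pos (by linarith), abs_of_pos (by linarith)]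
      exact max_eq_left hbc
    have e3 : max |x - (x + (c - a))| |(h + b) - h| = b := by
      rw [show x - (x + (c - a)) = -(c - a) by ring, show (h + b) - h = b by ring]
      rw [abs_neg, abs_of_nonneg (by linarith), abs_of_pos (by linarith)]
      exact max_eq_right (by linarith)
    rw [e1, e2, e3]
    show (a ::ₘ c ::ₘ b ::ₘ 0) = (a ::ₘ b ::ₘ c ::ₘ 0)
    rw [Multiset.cons_swap c b]
  exact hmono _ _ _ hcopy ⟨by rw [hl, hl], by rw [hl, hx']⟩

theorem stmt15 (a b c : ℝ) (ha : 0 < a) (hab : a ≤ b) (hbc : b ≤ c) (htri : c < a + b)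
    (C : ℝ × ℝ → Bool) (hmono : NoMonoCopy a b c C) (red : Bool)
    (hline : ∀ x : ℝ, C (x, 0) = red) :
    ∀ n m : ℕ, (Even (n + m) → ∀ x : ℝ, C (x, a * n + b * m) = red) ∧
               (¬ Even (n + m) → ∀ x : ℝ, C (x, a * n + b * m) = !red) := by
  have auxa : ∀ n : ℕ, ∀ x : ℝ, C (x, a * n) = (if Even n then red else !red) := by
    intro n
    induction n with
    | zero => intro x; simp [hline x]
    | succ k ih =>
      intro x
      have : C (x, a * k + a) = !(if Even k then red else !red) :=
        step_a a b c ha hab hbc htri C hmono (a * k) _ ih x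
      rw [show (a * (k + 1 : ℕ) : ℝ) = a * k + a by push_cast; ring, this]
      rcases Nat.even_or_odd k with hk | hk
      · simp [hk, Nat.even_add_one]
      · simp [Nat.not_even_iff_odd.mpr hk, Nat.even_add_one]
  have aux : ∀ n m : ℕ, ∀ x : ℝ,
      C (x, a * n + b * m) = (if Even (n + m) then red else !red) := by
    intro n m
    induction m with
    | zero => intro x; simpa using auxa n x
    | succ k ih =>
      intro x
      have : C (x, (a * n + b * k) + b) = !(if Even (n + k) then red else !red) :=
        step_b a b c ha hab hbc htri C hmono (a * n + b * k) _ ih x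
      rw [show (a * n + b * (k + 1 : ℕ) : ℝ) = (a * n + b * k) + b by push_cast; ring, this]
      rcases Nat.even_or_odd (n + k) with hk | hk
      · simp [hk, show n + (k+1) = (n+k)+1 by ring, Nat.even_add_one]
      · simp [Nat.not_even_iff_odd.mpr hk, show n + (k+1) = (n+k)+1 by ring,
          Nat.even_add_one]
  intro n m
  constructor
  · intro hp x; rw [aux n m x, if_pos hp]
  · intro hp x; rw [aux n m x, if_neg hp]
end

section
/- Let a ≤ b ≤ c be positive reals with c < a + b, and let C : ℝ² → Bool be a two-coloring with no monochromatic copy of T(a,b,c). If the segment I = {(x,0) : 0 ≤ x ≤ b+c−a} is entirely red, then every point (x₀, a) with c ≤ x₀ ≤ 2c−a is blue. -/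
theorem stmt17 (a b c : ℝ) (ha : 0 < a) (hab : a ≤ b) (hbc : b ≤ c) (htri : c < a + b)
    (C : ℝ × ℝ → Bool) (hmono : NoMonoCopy a b c C) (red : Bool)
    (hseg : ∀ x ∈ Set.Icc (0:ℝ) (b + c - a), C (x, 0) = red) :
    ∀ x₀ : ℝ, c ≤ x₀ → x₀ ≤ 2 * c - a → C (x₀, a) = !red := by
  intro x₀ hx1 hx2
  have h1 : C (x₀ - c, 0) = red := by
    apply hseg; constructor <;> [linarith; linarith]
  have h2 : C (x₀ - c + b, 0) = red := by
    apply hseg; constructor <;> [linarith; linarith]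
  have hcopy : IsCopy a b c (x₀ - c, 0) (x₀ - c + b, 0) (x₀, a) := by
    unfold IsCopy distInf
    have e1 : |(x₀ - c : ℝ) - (x₀ - c + b)| = b := by
      rw [abs_of_nonpos (by linarith)]; ring
    have e2 : |(x₀ - c + b : ℝ) - x₀| = c - b := by
      rw [abs_of_nonpos (by linarith)]; ring
    have e3 : |(x₀ : ℝ) - (x₀ - c)| = c := by
      rw [abs_of_nonneg (by linarith)]; ring
    have e4 : |(0:ℝ) - a| = a := by rw [abs_of_nonpos (by linarith)]; ring
    simp only [e1, e2, e3, e4, abs_of_nonneg ha.le, abs_zero, sub_zero]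
    have m1 : max b (0:ℝ) = b := max_eq_left (by linarith)
    have m2 : max (c - b) a = a := max_eq_right (by linarith)
    have m3 : max c a = c := max_eq_left (by linarith)
    rw [m1, m2, m3]
    exact Multiset.cons_swap b a {c}
  have := hmono _ _ _ hcopy
  rw [h1, h2] at this
  cases hC : C (x₀, a) <;> cases red <;> simp_all
end
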